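/- arXiv:2211.06920 — 4 statements merged into one kernel-verified Lean document; each statement's English description precedes it below -/
import Mathlib

section
/- Let G=(V,E,w) be an n-vertex (possibly directed) weighted graph, let ε ≥ 0, let ℓ ≥ 1 be an integer, and let n = β_0 ≥ β_1 ≥ ⋯ ≥ β_ℓ ≥ 1 be integers. Suppose that for every i ∈ {1,…,ℓ}, H_i is a (β_i,ε)-hopset for G. Then there exists a subgraph G' ⊆ G with at most Σ_{i=1}^{ℓ} |H_i|·β_{i−1} edges which is a β_ℓ-missing (1+ε)^ℓ-spanner for G. -/
open scoped ENNReal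

namespace Hopsets

/-- A weighted directed graph on vertex type `V`: a finite edge set together
with a weight function. -/
structure WDigraph (V : Type) where
  edges : Finset (V × V)
  w : V × V → ℝ

variable {V : Type}

/-- All edge weights are nonnegative. -/
def WDigraph.Nonneg (G : WDigraph V) : Prop := ∀ e, 0 ≤ G.w e

/-- Edge weights are polynomially bounded (degree `q`) in the number of vertices. -/
def WDigraph.PolyBounded [Fintype V] (G : WDigraph V) (q : ℕ) : Prop :=
  ∀ e ∈ G.edges, G.w e ≤ (Fintype.card V : ℝ) ^ q

/-- `G` encodes an undirected graph: edges come in symmetric pairs of equal weight. -/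
def WDigraph.Symmetric (G : WDigraph V) : Prop :=
  ∀ e ∈ G.edges, (e.2, e.1) ∈ G.edges ∧ G.w (e.2, e.1) = G.w e

/-- `G` is unweighted: every edge has weight `1`. -/
def WDigraph.Unweighted (G : WDigraph V) : Prop := ∀ e, G.w e = 1

/-- `IsWalkFrom G u v l` : the list of edges `l` forms a walk from `u` to `v` in `G`. -/
def IsWalkFrom (G : WDigraph V) : V → V → List (V × V) → Prop
  | u, v, [] => u = v
  | u, v, e :: l => e ∈ G.edges ∧ e.1 = u ∧ IsWalkFrom G e.2 v l

/-- The total weight of a walk, as an extended nonnegative real. -/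
noncomputable def walkWeight (G : WDigraph V) (l : List (V × V)) : ℝ≥0∞ :=
  ENNReal.ofReal ((l.map G.w).sum)

/-- `β`-hop-bounded distance: the infimum weight of a `u`-`v` walk with at most `β` edges. -/
noncomputable def WDigraph.hopDist (G : WDigraph V) (β : ℕ) (u v : V) : ℝ≥0∞ :=
  ⨅ l ∈ {l : List (V × V) | IsWalkFrom G u v l ∧ l.length ≤ β}, walkWeight G l

/-- Distance: infimum weight of a `u`-`v` walk (`∞` if there is none). -/
noncomputable def WDigraph.dist (G : WDigraph V) (u v : V) : ℝ≥0∞ :=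
  ⨅ l ∈ {l : List (V × V) | IsWalkFrom G u v l}, walkWeight G l

/-- `v` is reachable from `u` in `G`. -/
def WDigraph.Reachable (G : WDigraph V) (u v : V) : Prop :=
  ∃ l, IsWalkFrom G u v l

/-- The graph `G ∪ H` obtained by adding the edge set `H`, each added edge `(x,y)`
weighted by `dist_G(x,y)`. -/
noncomputable def WDigraph.augment [DecidableEq V] (G : WDigraph V) (H : Finset (V × V)) :
    WDigraph V where
  edges := G.edges ∪ H
  w := fun e => if e ∈ H then (G.dist e.1 e.2).toReal else G.w e

/-- `H` is a `(β,ε)`-hopset for `G`: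
`dist_G(u,v) ≤ dist^{(β)}_{G∪H}(u,v) ≤ (1+ε)·dist_G(u,v)` for all `u, v`. -/
def IsHopset [DecidableEq V] (G : WDigraph V) (β : ℕ) (ε : ℝ) (H : Finset (V × V)) : Prop :=
  ∀ u v, G.dist u v ≤ (G.augment H).hopDist β u v ∧
    (G.augment H).hopDist β u v ≤ ENNReal.ofReal (1 + ε) * G.dist u v

/-- The subgraph of `G` with edge set `E'` (same weights). -/
def WDigraph.sub (G : WDigraph V) (E' : Finset (V × V)) : WDigraph V :=
  ⟨E', G.w⟩

/-- `E'` (a subgraph of `G`) is an `r`-missing `t`-spanner: for every reachable pair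
`(u,v)` there is a `u`-`v` walk in `G` of weight at most `t·dist_G(u,v)` with at most
`r` edges outside `E'`. -/
def IsMissingSpanner [DecidableEq V] (G : WDigraph V) (E' : Finset (V × V))
    (r : ℕ) (t : ℝ) : Prop :=
  ∀ u v, G.Reachable u v → ∃ l, IsWalkFrom G u v l ∧
    walkWeight G l ≤ ENNReal.ofReal t * G.dist u v ∧
    (l.filter (fun e => decide (e ∉ E'))).length ≤ r

end Hopsets

/-!
Build the spanner level by level. Suppose `E` is a `β`-missing `t`-spanner and `H` a
`(β', ε)`-hopset. Every hopset edge `(x, y)` is joined by a `G`-walk of weight at most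
`t · dist(x, y)` with at most `β` edges outside `E`; adding those edges for all of `H` costs
at most `|H| · β` edges. Then any `u`-`v` walk with at most `β'` hops in `G ∪ H` turns,
after each hopset edge is expanded into its walk, into a `G`-walk of stretch `t (1 + ε)`
whose only edges outside the enlarged `E` are the `≤ β'` original edges of the hop-bounded
walk. So the new set is a `β'`-missing `t (1 + ε)`-spanner. The induction starts from the
empty set, a `|V|`-missing `1`-spanner because shortest walks can be taken cycle-free.
-/

namespace Hopsets

variable {V : Type} {G : WDigraph V}

section Walks

lemma isWalkFrom_append_iff {l₁ l₂ : List (V × V)} {u v : V} :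
    IsWalkFrom G u v (l₁ ++ l₂) ↔ ∃ m, IsWalkFrom G u m l₁ ∧ IsWalkFrom G m v l₂ := by
  induction l₁ generalizing u with
  | nil => exact ⟨fun h => ⟨u, rfl, h⟩, fun ⟨m, hum, h⟩ => (hum : u = m) ▸ h⟩
  | cons e t ih =>
    simp only [List.cons_append, IsWalkFrom, ih]
    exact ⟨fun ⟨he, heu, m, h₁, h₂⟩ => ⟨m, ⟨he, heu, h₁⟩, h₂⟩,
      fun ⟨m, ⟨he, heu, h₁⟩, h₂⟩ => ⟨he, heu, m, h₁, h₂⟩⟩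

lemma mem_edges_of_isWalkFrom {l : List (V × V)} {u v : V} (hl : IsWalkFrom G u v l) :
    ∀ e ∈ l, e ∈ G.edges := by
  induction l generalizing u with
  | nil => simp
  | cons a t ih =>
    obtain ⟨ha, -, ht⟩ := hl
    simpa [ha] using ih ht

lemma sum_map_w_nonneg (hG : G.Nonneg) (l : List (V × V)) : 0 ≤ (l.map G.w).sum :=
  List.sum_nonneg fun x hx => by
    obtain ⟨e, -, rfl⟩ := List.mem_map.mp hx
    exact hG e

lemma walkWeight_append (hG : G.Nonneg) (l₁ l₂ : List (V × V)) :
    walkWeight G (l₁ ++ l₂) = walkWeight G l₁ + walkWeight G l₂ := by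
  simp only [walkWeight, List.map_append, List.sum_append]
  exact ENNReal.ofReal_add (sum_map_w_nonneg hG l₁) (sum_map_w_nonneg hG l₂)

lemma walkWeight_cons (hG : G.Nonneg) (e : V × V) (l : List (V × V)) :
    walkWeight G (e :: l) = ENNReal.ofReal (G.w e) + walkWeight G l := by
  rw [← List.singleton_append, walkWeight_append hG]
  simp [walkWeight]

lemma walkWeight_le_of_suffix (hG : G.Nonneg) {l₁ l₂ : List (V × V)} (h : l₁ <:+ l₂) :
    walkWeight G l₁ ≤ walkWeight G l₂ := by
  obtain ⟨s, rfl⟩ := h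
  rw [walkWeight_append hG]
  exact le_add_self

lemma walkWeight_ne_top (l : List (V × V)) : walkWeight G l ≠ ⊤ :=
  ENNReal.ofReal_ne_top

lemma dist_le_walkWeight {l : List (V × V)} {u v : V} (h : IsWalkFrom G u v l) :
    G.dist u v ≤ walkWeight G l :=
  iInf₂_le l h

lemma hopDist_le_walkWeight {β : ℕ} {l : List (V × V)} {u v : V} (h : IsWalkFrom G u v l)
    (hl : l.length ≤ β) : G.hopDist β u v ≤ walkWeight G l :=
  iInf₂_le l ⟨h, hl⟩

lemma WDigraph.Reachable.dist_ne_top {u v : V} (h : G.Reachable u v) : G.dist u v ≠ ⊤ :=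
  ne_top_of_le_ne_top (walkWeight_ne_top _) (dist_le_walkWeight h.choose_spec)

lemma reachable_of_dist_ne_top {u v : V} (h : G.dist u v ≠ ⊤) : G.Reachable u v := by
  by_contra hr
  exact h (iInf₂_eq_top.mpr fun l hl => absurd ⟨l, hl⟩ hr)

lemma exists_walk_eq_hopDist [Finite V] {β : ℕ} {u v : V} (h : G.hopDist β u v ≠ ⊤) :
    ∃ l, IsWalkFrom G u v l ∧ l.length ≤ β ∧ walkWeight G l = G.hopDist β u v := by
  set S := {l : List (V × V) | IsWalkFrom G u v l ∧ l.length ≤ β}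
  have hS : S.Nonempty := by
    by_contra hS
    exact h (iInf₂_eq_top.mpr fun l hl => absurd ⟨l, hl⟩ hS)
  obtain ⟨l, hl, hmin⟩ := S.exists_min_image (walkWeight G)
    ((List.finite_length_le _ β).subset fun l hl => hl.2) hS
  exact ⟨l, hl.1, hl.2, le_antisymm (le_iInf₂ hmin) (iInf₂_le l hl)⟩

lemma exists_walk_nodup (hG : G.Nonneg) {l : List (V × V)} {u v : V}
    (hl : IsWalkFrom G u v l) : ∃ l', IsWalkFrom G u v l' ∧ (u :: l'.map Prod.snd).Nodup ∧
      walkWeight G l' ≤ walkWeight G l := by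
  induction l generalizing u with
  | nil => exact ⟨[], hl, by simp, le_rfl⟩
  | cons e t ih =>
    obtain ⟨he, rfl, ht⟩ := hl
    obtain ⟨t', ht', hnd, hwt⟩ := ih ht
    have hle : walkWeight G (e :: t') ≤ walkWeight G (e :: t) := by
      rw [walkWeight_cons hG, walkWeight_cons hG]
      gcongr
    by_cases hu : e.1 ∈ (e :: t').map Prod.snd
    · obtain ⟨f, hf, hfu⟩ := List.mem_map.mp hu
      obtain ⟨s, r, hsr⟩ := List.append_of_mem hf
      have hcons : IsWalkFrom G e.1 v (e :: t') := ⟨he, rfl, ht'⟩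
      have hwalk : IsWalkFrom G e.1 v (s ++ f :: r) := hsr ▸ hcons
      obtain ⟨m, -, hm, -, hr⟩ := isWalkFrom_append_iff.mp hwalk
      have hsuf : (f :: r).map Prod.snd <:+ (e :: t').map Prod.snd :=
        ⟨s.map Prod.snd, by rw [hsr, List.map_append]⟩
      refine ⟨r, hfu ▸ hr, ?_, ?_⟩
      · rw [← hfu]
        exact hnd.sublist hsuf.sublist
      · exact (walkWeight_le_of_suffix hG ⟨s ++ [f], by simp [hsr]⟩).trans hle
    · exact ⟨e :: t', ⟨he, rfl, ht'⟩, List.nodup_cons.mpr ⟨hu, hnd⟩, hle⟩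

lemma dist_eq_hopDist_card [Fintype V] (hG : G.Nonneg) (u v : V) :
    G.dist u v = G.hopDist (Fintype.card V) u v := by
  refine le_antisymm (le_iInf₂ fun l hl => dist_le_walkWeight hl.1) (le_iInf₂ fun l hl => ?_)
  obtain ⟨l', hl', hnd, hw⟩ := exists_walk_nodup hG hl
  have hlen : l'.length + 1 ≤ Fintype.card V := by simpa using hnd.length_le_card
  exact (hopDist_le_walkWeight hl' (by omega)).trans hw

end Walks

variable [DecidableEq V]

lemma augment_nonneg (hG : G.Nonneg) (H : Finset (V × V)) : (G.augment H).Nonneg := by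
  intro e
  by_cases he : e ∈ H
  · simp [WDigraph.augment, he]
  · simpa [WDigraph.augment, he] using hG e

lemma IsHopset.reachable_of_mem {β : ℕ} {ε : ℝ} {H : Finset (V × V)} {e : V × V}
    (hH : IsHopset G β ε H) (hβ : 1 ≤ β) (he : e ∈ H) : G.Reachable e.1 e.2 := by
  have hwalk : IsWalkFrom (G.augment H) e.1 e.2 [e] := ⟨Finset.mem_union_right _ he, rfl, rfl⟩
  exact reachable_of_dist_ne_top (ne_top_of_le_ne_top (walkWeight_ne_top [e])
    ((hH e.1 e.2).1.trans (hopDist_le_walkWeight hwalk hβ)))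

lemma isMissingSpanner_empty [Fintype V] (hG : G.Nonneg) :
    IsMissingSpanner G ∅ (Fintype.card V) 1 := by
  intro u v huv
  have hd := dist_eq_hopDist_card hG u v
  obtain ⟨l, hl, hlen, hw⟩ := exists_walk_eq_hopDist (hd ▸ huv.dist_ne_top)
  exact ⟨l, hl, by simp [hw, hd], (List.length_filter_le _ _).trans hlen⟩

def SpansPairs (G : WDigraph V) (E S : Finset (V × V)) (t : ℝ) : Prop :=
  ∀ e ∈ S, ∃ r, IsWalkFrom G e.1 e.2 r ∧ (∀ f ∈ r, f ∈ E) ∧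
    walkWeight G r ≤ ENNReal.ofReal t * G.dist e.1 e.2

lemma IsMissingSpanner.exists_spansPairs {E S : Finset (V × V)} {β : ℕ} {t : ℝ}
    (hE : E ⊆ G.edges) (hsp : IsMissingSpanner G E β t) (hS : ∀ e ∈ S, G.Reachable e.1 e.2) :
    ∃ E' ⊆ G.edges, E'.card ≤ E.card + S.card * β ∧ SpansPairs G E' S t := by
  choose! r hr using hsp
  let missing : V × V → Finset (V × V) :=
    fun e => ((r e.1 e.2).filter (fun f => decide (f ∉ E))).toFinset
  refine ⟨E ∪ S.biUnion missing, ?_, ?_, fun e he => ?_⟩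
  · refine Finset.union_subset hE fun f hf => ?_
    obtain ⟨e, he, hf⟩ := Finset.mem_biUnion.mp hf
    have hf' : f ∈ r e.1 e.2 := List.mem_of_mem_filter (List.mem_toFinset.mp hf)
    exact mem_edges_of_isWalkFrom (hr e.1 e.2 (hS e he)).1 f hf'
  · refine (Finset.card_union_le _ _).trans (Nat.add_le_add_left ?_ _)
    refine Finset.card_biUnion_le.trans (Finset.sum_le_card_nsmul _ _ _ fun e he => ?_)
    exact (List.toFinset_card_le _).trans (hr e.1 e.2 (hS e he)).2.2
  · obtain ⟨hwalk, hweight, -⟩ := hr e.1 e.2 (hS e he)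
    refine ⟨r e.1 e.2, hwalk, fun f hf => ?_, hweight⟩
    by_cases hfE : f ∈ E
    · exact Finset.mem_union_left _ hfE
    · exact Finset.mem_union_right _ (Finset.mem_biUnion.mpr
        ⟨e, he, List.mem_toFinset.mpr (List.mem_filter.mpr ⟨hf, by simpa using hfE⟩)⟩)

/-- Expanding every hopset edge of a walk in `G ∪ H` into its spanning walk. -/
lemma SpansPairs.exists_walk_of_augment (hG : G.Nonneg) {E H : Finset (V × V)} {t : ℝ}
    (ht : 1 ≤ t) (hspan : SpansPairs G E H t) {l : List (V × V)} {u v : V}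
    (hl : IsWalkFrom (G.augment H) u v l) :
    ∃ L, IsWalkFrom G u v L ∧
      walkWeight G L ≤ ENNReal.ofReal t * walkWeight (G.augment H) l ∧
      (L.filter (fun f => decide (f ∉ E))).length ≤ l.length := by
  induction l generalizing u with
  | nil => exact ⟨[], hl, by simp [walkWeight], by simp⟩
  | cons e s ih =>
    obtain ⟨he, rfl, hs⟩ := hl
    obtain ⟨L, hL, hLw, hLc⟩ := ih hs
    rw [walkWeight_cons (augment_nonneg hG H), mul_add, List.length_cons]
    by_cases heH : e ∈ H
    · obtain ⟨r, hr, hrE, hrw⟩ := hspan e heH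
      have hd : G.dist e.1 e.2 ≠ ⊤ := WDigraph.Reachable.dist_ne_top ⟨r, hr⟩
      have hwe : ENNReal.ofReal ((G.augment H).w e) = G.dist e.1 e.2 := by
        simp [WDigraph.augment, heH, ENNReal.ofReal_toReal hd]
      refine ⟨r ++ L, isWalkFrom_append_iff.mpr ⟨e.2, hr, hL⟩, ?_, ?_⟩
      · rw [walkWeight_append hG, hwe]
        exact add_le_add hrw hLw
      · have hr0 : r.filter (fun f => decide (f ∉ E)) = [] :=
          List.filter_eq_nil_iff.mpr fun f hf => by simpa using hrE f hf
        rw [List.filter_append, hr0, List.nil_append]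
        omega
    · have heG : e ∈ G.edges := (Finset.mem_union.mp he).resolve_right heH
      have hwe : (G.augment H).w e = G.w e := by simp [WDigraph.augment, heH]
      refine ⟨e :: L, ⟨heG, rfl, hL⟩, ?_, ?_⟩
      · rw [walkWeight_cons hG, hwe]
        exact add_le_add (le_mul_of_one_le_left zero_le (ENNReal.one_le_ofReal.mpr ht)) hLw
      · rw [List.filter_cons]
        split_ifs <;> (try rw [List.length_cons]) <;> omega

lemma SpansPairs.isMissingSpanner [Finite V] (hG : G.Nonneg) {E H : Finset (V × V)} {β : ℕ}
    {t ε : ℝ} (ht : 1 ≤ t) (hspan : SpansPairs G E H t) (hH : IsHopset G β ε H) :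
    IsMissingSpanner G E β (t * (1 + ε)) := by
  intro u v huv
  have hhop := (hH u v).2
  obtain ⟨l, hl, hlen, hw⟩ := exists_walk_eq_hopDist
    (ne_top_of_le_ne_top (ENNReal.mul_ne_top ENNReal.ofReal_ne_top huv.dist_ne_top) hhop)
  obtain ⟨L, hL, hLw, hLc⟩ := hspan.exists_walk_of_augment hG ht hl
  refine ⟨L, hL, ?_, hLc.trans hlen⟩
  calc walkWeight G L ≤ ENNReal.ofReal t * (G.augment H).hopDist β u v := hw ▸ hLw
    _ ≤ ENNReal.ofReal t * (ENNReal.ofReal (1 + ε) * G.dist u v) := by gcongr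
    _ = ENNReal.ofReal (t * (1 + ε)) * G.dist u v := by
      rw [ENNReal.ofReal_mul (by linarith), mul_assoc]

end Hopsets

open Hopsets in
theorem stmt_0_general {V : Type} [Fintype V] [DecidableEq V]
    (G : WDigraph V) (hG : G.Nonneg)
    (n : ℕ) (hn : Fintype.card V = n)
    (ε : ℝ) (hε : 0 ≤ ε)
    (ℓ : ℕ)
    (β : ℕ → ℕ) (hβ0 : β 0 = n)
    (hβmono : ∀ i < ℓ, β (i + 1) ≤ β i)
    (hβℓ : 1 ≤ β ℓ)
    (H : ℕ → Finset (V × V))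
    (hH : ∀ i, 1 ≤ i → i ≤ ℓ → IsHopset G (β i) ε (H i)) :
    ∃ E' ⊆ G.edges,
      E'.card ≤ ∑ i ∈ Finset.range ℓ, (H (i + 1)).card * β i ∧
      IsMissingSpanner G E' (β ℓ) ((1 + ε) ^ ℓ) := by
  have hβpos : ∀ i ≤ ℓ, 1 ≤ β i := fun i hi => by
    induction hi using Nat.decreasingInduction with
    | self => exact hβℓ
    | of_succ k hk ih => exact ih.trans (hβmono k hk)
  suffices ∀ i ≤ ℓ, ∃ E' ⊆ G.edges,
      E'.card ≤ ∑ k ∈ Finset.range i, (H (k + 1)).card * β k ∧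
      IsMissingSpanner G E' (β i) ((1 + ε) ^ i) from this ℓ le_rfl
  intro i hi
  induction i with
  | zero =>
    exact ⟨∅, by simp, by simp, by simpa [hβ0, hn] using isMissingSpanner_empty hG⟩
  | succ i ih =>
    obtain ⟨E, hE, hcard, hsp⟩ := ih (by omega)
    have hHi := hH (i + 1) (by omega) hi
    obtain ⟨E', hE', hcard', hspan⟩ :=
      hsp.exists_spansPairs hE fun e he => hHi.reachable_of_mem (hβpos _ hi) he
    refine ⟨E', hE', ?_, ?_⟩
    · rw [Finset.sum_range_succ]
      omega
    · rw [pow_succ]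
      exact hspan.isMissingSpanner hG (one_le_pow₀ (by linarith)) hHi

open Hopsets in
/-- A hierarchy of `(β_i, ε)`-hopsets `H_1, …, H_ℓ` for `G`, with
`n = β_0 ≥ β_1 ≥ ⋯ ≥ β_ℓ ≥ 1`, yields a subgraph `G' ⊆ G` with at most
`Σ_{i=1}^{ℓ} |H_i|·β_{i−1}` edges that is a `β_ℓ`-missing `(1+ε)^ℓ`-spanner for `G`. -/
theorem stmt_0 {V : Type} [Fintype V] [DecidableEq V]
    (G : WDigraph V) (hG : G.Nonneg)
    (n : ℕ) (hn : Fintype.card V = n)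
    (ε : ℝ) (hε : 0 ≤ ε)
    (ℓ : ℕ) (hℓ : 1 ≤ ℓ)
    (β : ℕ → ℕ) (hβ0 : β 0 = n)
    (hβmono : ∀ i < ℓ, β (i + 1) ≤ β i)
    (hβℓ : 1 ≤ β ℓ)
    (H : ℕ → Finset (V × V))
    (hH : ∀ i, 1 ≤ i → i ≤ ℓ → IsHopset G (β i) ε (H i)) :
    ∃ E' ⊆ G.edges,
      E'.card ≤ ∑ i ∈ Finset.range ℓ, (H (i + 1)).card * β i ∧
      IsMissingSpanner G E' (β ℓ) ((1 + ε) ^ ℓ) :=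
  stmt_0_general G hG n hn ε hε ℓ β hβ0 hβmono hβℓ H hH
end

section
/- Fix an integer k ≥ 1 and suppose (Erdős girth conjecture, bipartite form) that there is a constant c > 0 such that for every n there exists an unweighted bipartite graph G'=(V,U,E') with |V|=|U|=n, |E'| ≥ c·n^{1+1/k}, and girth at least 2k+2. Then there is a constant c' > 0 such that for all sufficiently large n and every σ with 1 ≤ σ ≤ n, there exists an unweighted bipartite graph G=(V,S,E) with |V|=n, |S|=σ and |E| ≥ c'·σ·n^{1/k}, such that for every edge (u,v) ∈ E, removing (u,v) from G yields a graph G' with dist_{G'}(u,v) ≥ 2k+1. -/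
/-! Start from a bipartite graph on `n + n` vertices with girth at least `2k + 2` and keep only the
`σ` right-hand vertices of largest degree: by Chebyshev's sum inequality they carry at least a
`σ / n` fraction of the `c n^{1 + 1/k}` edges. The result embeds into the original graph, so its
girth is still at least `2k + 2`; a `u`–`v` path avoiding the edge `uv` closes up with it into a
cycle, so it has length at least `2k + 1`. -/

open Finset

namespace Finset

variable {ι α : Type*}

theorem exists_subset_card_eq_forall_le [LinearOrder α] (f : ι → α) {t : Finset ι} {σ : ℕ}
    (hσ : σ ≤ #t) : ∃ s ⊆ t, #s = σ ∧ ∀ i ∈ t, i ∉ s → ∀ j ∈ s, f i ≤ f j := by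
  classical
  induction σ with
  | zero => exact ⟨∅, empty_subset t, rfl, by simp⟩
  | succ σ ih =>
    obtain ⟨s, hst, hs, hsep⟩ := ih (by omega)
    have hne : (t \ s).Nonempty := by
      rw [← card_pos, card_sdiff_of_subset hst]; omega
    obtain ⟨x, hx, hmax⟩ := (t \ s).exists_max_image f hne
    rw [mem_sdiff] at hx
    refine ⟨insert x s, insert_subset hx.1 hst, by rw [card_insert_of_notMem hx.2, hs], ?_⟩
    intro i hi his j hj
    rw [mem_insert, not_or] at his
    rcases mem_insert.1 hj with rfl | hj
    · exact hmax i (mem_sdiff.2 ⟨hi, his.2⟩)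
    · exact hsep i hi his.2 j hj

theorem exists_subset_card_eq_mul_sum_le [Semiring α] [LinearOrder α] [IsStrictOrderedRing α]
    [ExistsAddOfLE α] (f : ι → α) {t : Finset ι} {σ : ℕ} (hσ : σ ≤ #t) :
    ∃ s ⊆ t, #s = σ ∧ σ * ∑ i ∈ t, f i ≤ #t * ∑ i ∈ s, f i := by
  classical
  obtain ⟨s, hst, hs, hsep⟩ := exists_subset_card_eq_forall_le f hσ
  have hmono : MonovaryOn f (fun i ↦ if i ∈ s then (1 : α) else 0) t := by
    intro i hi j _ hij
    dsimp only at hij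
    split_ifs at hij with his hjs hjs <;> norm_num at hij
    exact hsep i hi his j hjs
  refine ⟨s, hst, hs, ?_⟩
  have := hmono.sum_mul_sum_le_card_mul_sum
  simp only [mul_ite, mul_one, mul_zero, sum_ite_mem, inter_eq_right.2 hst] at this
  rw [Nat.cast_comm]
  simpa [hs] using this

end Finset

namespace SimpleGraph

variable {V α β : Type*}

theorem egirth_le_edist_deleteEdges_add_one {G : SimpleGraph V} {u v : V} (h : G.Adj u v) :
    G.egirth ≤ (G.deleteEdges {s(u, v)}).edist u v + 1 := by
  classical
  by_cases hr : (G.deleteEdges {s(u, v)}).Reachable u v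
  · obtain ⟨p, hp⟩ := hr.exists_walk_length_eq_edist
    let q := p.bypass.mapLe (G.deleteEdges_le _)
    have hvu : s(v, u) ∉ q.edges := fun hmem ↦ by
      have := p.bypass.edges_subset_edgeSet (by simpa [q] using hmem)
      simp [Sym2.eq_swap] at this
    calc G.egirth ≤ (Walk.cons h.symm q).length :=
          egirth_le_length ((Walk.cons_isCycle_iff _ _).2 ⟨p.bypass_isPath.mapLe _, hvu⟩)
      _ = p.bypass.length + 1 := by simp [q]
      _ ≤ p.length + 1 := by gcongr; exact p.length_bypass_le_length
      _ = _ := by rw [hp]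
  · simp [edist_eq_top_of_not_reachable hr]

theorem ncard_edgeSet_eq_sum_card_adj_inr [Fintype α] [Fintype β] {H : SimpleGraph (α ⊕ β)}
    [DecidableRel H.Adj]
    (hH : ∀ u v, H.Adj u v → (u.isLeft ∧ v.isRight) ∨ (u.isRight ∧ v.isLeft)) :
    H.edgeSet.ncard = ∑ b, #{a | H.Adj (.inl a) (.inr b)} := by
  have hbip :
      H.IsBipartiteWith (univ.map .inl : Finset (α ⊕ β)) (univ.map .inr : Finset (α ⊕ β)) := by
    refine ⟨by simp [Set.disjoint_left], fun u v huv ↦ ?_⟩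
    have := hH u v huv
    cases u <;> cases v <;> simp_all
  rw [← coe_edgeFinset, Set.ncard_coe_finset, ← isBipartiteWith_sum_degrees_eq_card_edges' hbip,
    sum_map]
  refine sum_congr rfl fun b _ ↦ ?_
  rw [← card_neighborFinset_eq_degree, isBipartiteWith_neighborFinset' hbip (by simp), filter_map,
    card_map]
  rfl

theorem exists_embedding_mul_ncard_edgeSet_le_comap [Fintype α] [Fintype β]
    {H : SimpleGraph (α ⊕ β)}
    (hH : ∀ u v, H.Adj u v → (u.isLeft ∧ v.isRight) ∨ (u.isRight ∧ v.isLeft))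
    {σ : ℕ} (hσ : σ ≤ Fintype.card β) :
    ∃ e : Fin σ ↪ β, σ * H.edgeSet.ncard ≤
      Fintype.card β * (H.comap (Sum.map id e)).edgeSet.ncard := by
  classical
  obtain ⟨T, -, hT, hsum⟩ :=
    exists_subset_card_eq_mul_sum_le (fun b ↦ #{a | H.Adj (.inl a) (.inr b)}) (t := univ)
      (by simpa using hσ)
  let e : Fin σ ≃ T := (T.equivFinOfCardEq hT).symm
  refine ⟨e.toEmbedding.trans (.subtype _), ?_⟩
  rw [ncard_edgeSet_eq_sum_card_adj_inr hH,
    ncard_edgeSet_eq_sum_card_adj_inr fun u v huv ↦ by simpa using hH _ _ huv]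
  have hT_sum : ∑ w ∈ T, #{a | H.Adj (.inl a) (.inr w)} =
      ∑ b, #{a | H.Adj (.inl a) (.inr (e b : β))} := by
    rw [← sum_coe_sort T]
    exact (Fintype.sum_equiv e _ _ fun b ↦ rfl).symm
  simpa [hT_sum] using hsum

end SimpleGraph

open SimpleGraph

theorem stmt_14_general (k : ℕ)
    (hyp : ∃ c : ℝ, 0 < c ∧ ∀ n : ℕ, ∃ G' : SimpleGraph (Fin n ⊕ Fin n),
      (∀ u v, G'.Adj u v → (u.isLeft ∧ v.isRight) ∨ (u.isRight ∧ v.isLeft)) ∧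
      c * (n : ℝ) ^ (1 + 1 / (k : ℝ)) ≤ (G'.edgeSet.ncard : ℝ) ∧
      (2 * k + 2 : ℕ∞) ≤ G'.egirth) :
    ∃ c' : ℝ, 0 < c' ∧ ∃ n0 : ℕ, ∀ n ≥ n0, ∀ σ : ℕ, 1 ≤ σ → σ ≤ n →
      ∃ G : SimpleGraph (Fin n ⊕ Fin σ),
        (∀ u v, G.Adj u v → (u.isLeft ∧ v.isRight) ∨ (u.isRight ∧ v.isLeft)) ∧
        c' * (σ : ℝ) * (n : ℝ) ^ (1 / (k : ℝ)) ≤ (G.edgeSet.ncard : ℝ) ∧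
        ∀ u v, G.Adj u v →
          (2 * k + 1 : ℕ∞) ≤ (G.deleteEdges {s(u, v)}).edist u v := by
  obtain ⟨c, hc, hdense⟩ := hyp
  refine ⟨c, hc, 0, fun n _ σ hσ hσn ↦ ?_⟩
  obtain ⟨H, hH, hcard, hgirth⟩ := hdense n
  obtain ⟨e, he⟩ := exists_embedding_mul_ncard_edgeSet_le_comap hH (by simpa using hσn)
  refine ⟨H.comap (Sum.map id e), fun u v huv ↦ by simpa using hH _ _ huv, ?_, fun u v huv ↦ ?_⟩
  · have hn : (0 : ℝ) < n := by exact_mod_cast hσ.trans hσn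
    have he' : (σ : ℝ) * H.edgeSet.ncard ≤ n * (H.comap (Sum.map id e)).edgeSet.ncard := by
      exact_mod_cast (by simpa using he)
    refine le_of_mul_le_mul_left ?_ hn
    calc (n : ℝ) * (c * σ * (n : ℝ) ^ (1 / (k : ℝ)))
        = σ * (c * (n : ℝ) ^ (1 + 1 / (k : ℝ))) := by
          rw [Real.rpow_one_add' hn.le (by positivity)]; ring
      _ ≤ σ * H.edgeSet.ncard := by gcongr
      _ ≤ _ := he'
  · have hsub : H.egirth ≤ (H.comap (Sum.map id e)).egirth :=
      (Embedding.comap (Function.Embedding.sumMap (.refl _) e) H).isContained.egirth_le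
    have hcycle := egirth_le_edist_deleteEdges_add_one huv
    rw [← ENat.add_le_add_iff_right ENat.one_ne_top]
    calc (2 * k + 1 : ℕ∞) + 1 = 2 * k + 2 := by ring
      _ ≤ _ := hgirth.trans (hsub.trans hcycle)

/-- Assuming the bipartite form of the Erdős girth conjecture for
parameter `k` (bipartite graphs with parts of size `n`, at least `c·n^{1+1/k}` edges
and girth at least `2k+2`), for all sufficiently large `n` and every `1 ≤ σ ≤ n` there
is a bipartite graph `G = (V, S, E)` with `|V| = n`, `|S| = σ` and
`|E| ≥ c'·σ·n^{1/k}` in which deleting any edge `(u,v)` leaves `u` and `v` at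
distance at least `2k+1`. -/
theorem stmt_14 (k : ℕ) (hk : 1 ≤ k)
    (hyp : ∃ c : ℝ, 0 < c ∧ ∀ n : ℕ, ∃ G' : SimpleGraph (Fin n ⊕ Fin n),
      (∀ u v, G'.Adj u v → (u.isLeft ∧ v.isRight) ∨ (u.isRight ∧ v.isLeft)) ∧
      c * (n : ℝ) ^ (1 + 1 / (k : ℝ)) ≤ (G'.edgeSet.ncard : ℝ) ∧
      (2 * k + 2 : ℕ∞) ≤ G'.egirth) :
    ∃ c' : ℝ, 0 < c' ∧ ∃ n0 : ℕ, ∀ n ≥ n0, ∀ σ : ℕ, 1 ≤ σ → σ ≤ n →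
      ∃ G : SimpleGraph (Fin n ⊕ Fin σ),
        (∀ u v, G.Adj u v → (u.isLeft ∧ v.isRight) ∨ (u.isRight ∧ v.isLeft)) ∧
        c' * (σ : ℝ) * (n : ℝ) ^ (1 / (k : ℝ)) ≤ (G.edgeSet.ncard : ℝ) ∧
        ∀ u v, G.Adj u v →
          (2 * k + 1 : ℕ∞) ≤ (G.deleteEdges {s(u, v)}).edist u v :=
  stmt_14_general k hyp
end

section
/- For every δ > 0 and every constant C > 0 there exists n_0 such that for every n ≥ n_0 there exists an n-vertex unweighted undirected graph G with the following property: every (β,0)-hopset H for G (i.e., an exact hopset: dist^{(β)}_{G∪H}(u,v) = dist_G(u,v) for all u,v) with |H| ≤ C·n satisfies β ≥ n^{1/5−δ}. -/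
open scoped ENNReal

/-!
The graph is a grid of width `(2L+1)s` and height `5Ls²` whose edges are the steps `±(i, i²)`,
`s < i ≤ 2s`. For `s < j ≤ 2s` the potential `(x, y) ↦ 2jx - y` grows by at most `j²` along an
edge, and by exactly `j²` only along the step `(j, j²)`. Hence the `L` steps `(j, j²)` from a point
`(a₁, a₂)` with `a₁ < s` form a shortest path, and since a hopset edge is weighted by a distance,
every walk of weight `L` in `G ∪ H` between its ends runs along this line. With fewer than `L` hops
one of its edges has weight at least `2`, so it is a hopset edge joining two points of the line; as
`a₁ < s < j`, that edge determines the triple `(j, a₁, a₂)`. So an exact hopset with hopbound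
`β < L` has at least `L s⁴` edges. Taking `s = KL` gives `n ≍ K³L⁵` vertices and
`|H| ≥ K⁴L⁵ > Cn` once `K ≫ C`, whence `β ≥ L ≳ n^{1/5}`.
-/

namespace Hopsets

theorem exists_sum_map_eq_natCast {α R : Type*} [AddMonoidWithOne R] {f : α → R} :
    ∀ {l : List α}, (∀ a ∈ l, ∃ k : ℕ, f a = k) → ∃ m : ℕ, (l.map f).sum = m
  | [], _ => ⟨0, by simp⟩
  | a :: l, h => by
    obtain ⟨k, hk⟩ := h a List.mem_cons_self
    obtain ⟨m, hm⟩ := exists_sum_map_eq_natCast fun b hb => h b (List.mem_cons_of_mem _ hb)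
    exact ⟨k + m, by simp [hk, hm]⟩

theorem exists_mem_one_lt_of_length_lt_sum {α : Type*} {f : α → ℝ} {l : List α}
    (h : (l.length : ℝ) < (l.map f).sum) : ∃ a ∈ l, 1 < f a := by
  by_contra! hle
  have := List.sum_le_card_nsmul (l.map f) 1 (by
    simpa only [List.mem_map, forall_exists_index, and_imp, forall_apply_eq_imp_iff₂] using hle)
  rw [List.length_map, nsmul_one] at this
  linarith

section Walks

variable {V : Type} {G : WDigraph V} {u v : V} {l : List (V × V)}

theorem IsWalkFrom.mem_edges (h : IsWalkFrom G u v l) {e : V × V} (he : e ∈ l) :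
    e ∈ G.edges := by
  induction l generalizing u with
  | nil => simp at he
  | cons e' l ih =>
    obtain ⟨he', -, hl⟩ := h
    rcases List.mem_cons.mp he with rfl | he
    exacts [he', ih hl he]

theorem IsWalkFrom.dist_le (h : IsWalkFrom G u v l) : G.dist u v ≤ walkWeight G l :=
  iInf₂_le l h

theorem IsWalkFrom.hopDist_le {β : ℕ} (h : IsWalkFrom G u v l) (hl : l.length ≤ β) :
    G.hopDist β u v ≤ walkWeight G l :=
  iInf₂_le l ⟨h, hl⟩

theorem exists_walk_of_hopDist_lt {β : ℕ} {c : ℝ≥0∞} (h : G.hopDist β u v < c) :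
    ∃ l, IsWalkFrom G u v l ∧ l.length ≤ β ∧ walkWeight G l < c := by
  simp only [WDigraph.hopDist, iInf_lt_iff] at h
  obtain ⟨l, ⟨hl, hβ⟩, hc⟩ := h
  exact ⟨l, hl, hβ, hc⟩

theorem dist_eq_top_of_not_reachable (h : ¬ G.Reachable u v) : G.dist u v = ⊤ :=
  iInf₂_eq_top.mpr fun l hl => absurd ⟨l, hl⟩ h

theorem walkWeight_of_unweighted (hU : G.Unweighted) (l : List (V × V)) :
    walkWeight G l = l.length := by
  simp [walkWeight, show G.w = fun _ => 1 from funext hU]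

theorem exists_walk_length_eq_dist (hU : G.Unweighted) (h : G.Reachable u v) :
    ∃ l, IsWalkFrom G u v l ∧ G.dist u v = l.length := by
  classical
  have hex : ∃ k, ∃ l, IsWalkFrom G u v l ∧ l.length = k := ⟨_, h.choose, h.choose_spec, rfl⟩
  obtain ⟨l, hl, hlen⟩ := Nat.find_spec hex
  refine ⟨l, hl, le_antisymm (walkWeight_of_unweighted hU l ▸ hl.dist_le) ?_⟩
  refine le_iInf₂ fun l' hl' => ?_
  rw [walkWeight_of_unweighted hU, hlen]
  exact_mod_cast Nat.find_min' hex ⟨l', hl', rfl⟩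

theorem IsWalkFrom.forall_mem_fst {P : V → Prop} (h : IsWalkFrom G u v l) (hu : P u)
    (hstep : ∀ e ∈ l, P e.1 → P e.2) : ∀ e ∈ l, P e.1 := by
  induction l generalizing u with
  | nil => simp
  | cons e l ih =>
    obtain ⟨-, rfl, hl⟩ := h
    rintro e' (_ | ⟨_, he'⟩)
    · exact hu
    · exact ih hl (hstep e List.mem_cons_self hu)
        (fun e he => hstep e (List.mem_cons_of_mem _ he)) e' he'

theorem exists_walk_of_forall_mem_edges :
    ∀ {k : ℕ} (p : Fin (k + 1) → V), (∀ i : Fin k, (p i.castSucc, p i.succ) ∈ G.edges) →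
      ∃ l, IsWalkFrom G (p 0) (p (Fin.last k)) l ∧ l.length = k
  | 0, _, _ => ⟨[], rfl, rfl⟩
  | k + 1, p, h => by
    obtain ⟨l, hl, hlen⟩ := exists_walk_of_forall_mem_edges (fun i => p i.succ) fun i => h i.succ
    exact ⟨(p 0, p 1) :: l, ⟨h 0, rfl, hl⟩, by simp [hlen]⟩

section Potential

variable {M : Type*} [AddCommGroup M] (g : V → M) (D : V × V → M)

theorem IsWalkFrom.sub_eq_sum (h : IsWalkFrom G u v l) (hD : ∀ e ∈ l, g e.2 - g e.1 = D e) :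
    g v - g u = (l.map D).sum := by
  induction l generalizing u with
  | nil => simp [show u = v from h]
  | cons e l ih =>
    obtain ⟨-, rfl, hl⟩ := h
    rw [List.map_cons, List.sum_cons, ← hD e List.mem_cons_self,
      ← ih hl fun e' he' => hD e' (List.mem_cons_of_mem _ he')]
    abel

variable [PartialOrder M] [IsOrderedAddMonoid M]

theorem IsWalkFrom.sub_le_sum (h : IsWalkFrom G u v l) (hD : ∀ e ∈ l, g e.2 - g e.1 ≤ D e) :
    g v - g u ≤ (l.map D).sum := by
  induction l generalizing u with
  | nil => simp [show u = v from h]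
  | cons e l ih =>
    obtain ⟨-, rfl, hl⟩ := h
    calc g v - g e.1 = (g e.2 - g e.1) + (g v - g e.2) := by abel
      _ ≤ _ := add_le_add (hD e List.mem_cons_self)
          (ih hl fun e' he' => hD e' (List.mem_cons_of_mem _ he'))

theorem IsWalkFrom.sub_eq_of_sum_le (h : IsWalkFrom G u v l)
    (hD : ∀ e ∈ l, g e.2 - g e.1 ≤ D e) (hsum : (l.map D).sum ≤ g v - g u) :
    ∀ e ∈ l, g e.2 - g e.1 = D e := by
  induction l generalizing u with
  | nil => simp
  | cons e l ih =>
    obtain ⟨-, rfl, hl⟩ := h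
    have hD' : ∀ e' ∈ l, g e'.2 - g e'.1 ≤ D e' := fun e' he' => hD e' (List.mem_cons_of_mem _ he')
    have he := hD e List.mem_cons_self
    have htail := hl.sub_le_sum g D hD'
    have hsplit : g v - g e.1 = (g e.2 - g e.1) + (g v - g e.2) := by abel
    rw [List.map_cons, List.sum_cons, hsplit] at hsum
    have he_eq : g e.2 - g e.1 = D e :=
      le_antisymm he (le_of_add_le_add_right (hsum.trans (add_le_add le_rfl htail)))
    have htail_eq : (l.map D).sum ≤ g v - g e.2 := by
      rw [he_eq] at hsum
      exact le_of_add_le_add_left hsum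
    rintro e' (_ | ⟨_, he'⟩)
    exacts [he_eq, ih hl hD' htail_eq e' he']

end Potential

end Walks

section Augment

variable {V : Type} [DecidableEq V] {G : WDigraph V} {H : Finset (V × V)} {e : V × V}

theorem augment_w_of_notMem (he : e ∉ H) : (G.augment H).w e = G.w e := if_neg he

theorem reachable_of_mem_of_hopDist_eq_dist {β : ℕ}
    (hEq : ∀ u v, (G.augment H).hopDist β u v = G.dist u v) (hβ : 1 ≤ β) (he : e ∈ H) :
    G.Reachable e.1 e.2 := by
  by_contra hr
  have hwalk : IsWalkFrom (G.augment H) e.1 e.2 [e] :=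
    ⟨Finset.mem_union_right _ he, rfl, rfl⟩
  -- the added edge gets the junk weight `(⊤ : ℝ≥0∞).toReal = 0`
  have hzero : walkWeight (G.augment H) [e] = 0 := by
    simp [walkWeight, WDigraph.augment, he, dist_eq_top_of_not_reachable hr]
  have := hwalk.hopDist_le hβ
  rw [hEq, dist_eq_top_of_not_reachable hr, hzero] at this
  exact ENNReal.top_ne_zero (le_zero_iff.mp this)

theorem exists_walk_of_mem_augment (hU : G.Unweighted) (hH : ∀ e ∈ H, G.Reachable e.1 e.2)
    (he : e ∈ (G.augment H).edges) :
    ∃ l, IsWalkFrom G e.1 e.2 l ∧ (G.augment H).w e = l.length := by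
  by_cases heH : e ∈ H
  · obtain ⟨l, hl, hdist⟩ := exists_walk_length_eq_dist hU (hH e heH)
    refine ⟨l, hl, ?_⟩
    simp [WDigraph.augment, heH, hdist]
  · refine ⟨[e], ⟨(Finset.mem_union.mp he).resolve_right heH, rfl, rfl⟩, ?_⟩
    simp [augment_w_of_notMem heH, hU e]

end Augment

section Parabola

variable {s i j : ℕ}

def parabolaVec (i : ℕ) : ℤ × ℤ := (i, i ^ 2)

/-- Level lines are parallel to the tangent of the parabola `y = x²` at `x = j`, so among the
points `(i, i²)` this functional is largest at `i = j`. -/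
def tangentPotential (j : ℕ) : ℤ × ℤ →+ ℤ :=
  (2 * (j : ℤ)) • AddMonoidHom.fst ℤ ℤ - AddMonoidHom.snd ℤ ℤ

theorem tangentPotential_apply (z : ℤ × ℤ) : tangentPotential j z = 2 * j * z.1 - z.2 := by
  simp [tangentPotential]

theorem tangentPotential_parabolaVec :
    tangentPotential j (parabolaVec i) = j ^ 2 - (i - j : ℤ) ^ 2 := by
  rw [tangentPotential_apply, parabolaVec]; ring

def IsStep (s : ℕ) (d : ℤ × ℤ) : Prop :=
  ∃ i, s < i ∧ i ≤ 2 * s ∧ (d = parabolaVec i ∨ d = -parabolaVec i)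

theorem IsStep.neg {d : ℤ × ℤ} (h : IsStep s d) : IsStep s (-d) := by
  obtain ⟨i, hi, hi', hd | hd⟩ := h
  exacts [⟨i, hi, hi', Or.inr (by rw [hd])⟩, ⟨i, hi, hi', Or.inl (by rw [hd, neg_neg])⟩]

theorem sub_sq_lt_sq (hj : s < j) (hi : s < i) (hi' : i ≤ 2 * s) : (i - j : ℤ) ^ 2 < j ^ 2 := by
  rw [sq_lt_sq, abs_of_pos (by omega : (0 : ℤ) < j)]
  exact abs_sub_lt_iff.mpr ⟨by omega, by omega⟩

variable {d : ℤ × ℤ}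

theorem IsStep.tangentPotential_le (hd : IsStep s d) (hj : s < j) :
    tangentPotential j d ≤ j ^ 2 := by
  obtain ⟨i, hi, hi', rfl | rfl⟩ := hd
  · rw [tangentPotential_parabolaVec]; nlinarith
  · rw [map_neg, tangentPotential_parabolaVec]; nlinarith [sub_sq_lt_sq hj hi hi']

theorem IsStep.eq_of_tangentPotential_eq (hd : IsStep s d) (hj : s < j)
    (h : tangentPotential j d = j ^ 2) : d = parabolaVec j := by
  obtain ⟨i, hi, hi', rfl | rfl⟩ := hd
  · rw [tangentPotential_parabolaVec] at h
    have : (i : ℤ) = j := by nlinarith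
    rw [Nat.cast_inj.mp this]
  · rw [map_neg, tangentPotential_parabolaVec] at h
    nlinarith [sub_sq_lt_sq hj hi hi']

end Parabola

section Grid

variable {n w h s j : ℕ}

def toGrid (w : ℕ) {n : ℕ} (u : Fin n) : ℤ × ℤ := ((u % w : ℕ), (u / w : ℕ))

theorem exists_toGrid_eq (hn : w * h ≤ n) {x y : ℕ} (hx : x < w) (hy : y < h) :
    ∃ u : Fin n, toGrid w u = ((x : ℤ), (y : ℤ)) := by
  have hlt : x + w * y < n := by nlinarith
  refine ⟨⟨x + w * y, hlt⟩, ?_⟩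
  simp [toGrid, Nat.add_mul_mod_self_left, Nat.mod_eq_of_lt hx,
    Nat.add_mul_div_left _ _ (by omega : 0 < w), Nat.div_eq_of_lt hx]

open scoped Classical in
noncomputable def parabolaGraph (n w s : ℕ) : WDigraph (Fin n) where
  edges := Finset.univ.filter fun p => IsStep s (toGrid w p.2 - toGrid w p.1)
  w := fun _ => 1

theorem mem_parabolaGraph_edges {p : Fin n × Fin n} :
    p ∈ (parabolaGraph n w s).edges ↔ IsStep s (toGrid w p.2 - toGrid w p.1) := by
  classical
  simp [parabolaGraph]

theorem parabolaGraph_symmetric : (parabolaGraph n w s).Symmetric := fun e he =>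
  ⟨mem_parabolaGraph_edges.mpr (by simpa using (mem_parabolaGraph_edges.mp he).neg), rfl⟩

theorem parabolaGraph_unweighted : (parabolaGraph n w s).Unweighted := fun _ => rfl

variable {x y : Fin n} {l : List (Fin n × Fin n)}

theorem tangentPotential_le_of_isWalkFrom (hj : s < j)
    (hl : IsWalkFrom (parabolaGraph n w s) x y l) :
    tangentPotential j (toGrid w y - toGrid w x) ≤ j ^ 2 * l.length := by
  have := hl.sub_le_sum (fun z => tangentPotential j (toGrid w z)) (fun _ => (j : ℤ) ^ 2)
    fun e he => by
      rw [← map_sub]; exact (mem_parabolaGraph_edges.mp (hl.mem_edges he)).tangentPotential_le hj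
  simpa [mul_comm] using this

theorem sub_eq_smul_of_tangentPotential_eq (hj : s < j)
    (hl : IsWalkFrom (parabolaGraph n w s) x y l)
    (heq : tangentPotential j (toGrid w y - toGrid w x) = j ^ 2 * l.length) :
    toGrid w y - toGrid w x = l.length • parabolaVec j := by
  set g := fun z => tangentPotential j (toGrid w z)
  have hstep : ∀ e ∈ l, IsStep s (toGrid w e.2 - toGrid w e.1) :=
    fun e he => mem_parabolaGraph_edges.mp (hl.mem_edges he)
  have htight := hl.sub_eq_of_sum_le g (fun _ => (j : ℤ) ^ 2)
    (fun e he => by simpa [g, ← map_sub] using (hstep e he).tangentPotential_le hj)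
    (by simpa [g, ← map_sub, mul_comm] using heq.ge)
  have := hl.sub_eq_sum (toGrid w) (fun _ => parabolaVec j) fun e he =>
    (hstep e he).eq_of_tangentPotential_eq hj (by simpa [g, ← map_sub] using htight e he)
  simpa using this

end Grid

section AugmentedGrid

variable {n w s j : ℕ} {H : Finset (Fin n × Fin n)}

theorem exists_weight_eq_of_mem_augment_parabolaGraph
    (hH : ∀ e ∈ H, (parabolaGraph n w s).Reachable e.1 e.2) (hj : s < j) {e : Fin n × Fin n}
    (he : e ∈ ((parabolaGraph n w s).augment H).edges) :
    ∃ k : ℕ, ((parabolaGraph n w s).augment H).w e = k ∧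
      tangentPotential j (toGrid w e.2 - toGrid w e.1) ≤ j ^ 2 * k ∧
      (tangentPotential j (toGrid w e.2 - toGrid w e.1) = j ^ 2 * k →
        toGrid w e.2 - toGrid w e.1 = k • parabolaVec j) := by
  obtain ⟨l, hl, hw⟩ := exists_walk_of_mem_augment parabolaGraph_unweighted hH he
  exact ⟨l.length, hw, tangentPotential_le_of_isWalkFrom hj hl,
    sub_eq_smul_of_tangentPotential_eq hj hl⟩

theorem isWalkFrom_augment_parabolaGraph_along_line
    (hH : ∀ e ∈ H, (parabolaGraph n w s).Reachable e.1 e.2) (hj : s < j) {L : ℕ}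
    {x y : Fin n} {l : List (Fin n × Fin n)}
    (hl : IsWalkFrom ((parabolaGraph n w s).augment H) x y l)
    (hxy : toGrid w y - toGrid w x = L • parabolaVec j)
    (hweight : walkWeight ((parabolaGraph n w s).augment H) l < L + 1) :
    (l.map ((parabolaGraph n w s).augment H).w).sum = L ∧
      ∀ e ∈ l, ∃ k : ℕ, ((parabolaGraph n w s).augment H).w e = k ∧
        toGrid w e.2 - toGrid w e.1 = k • parabolaVec j := by
  set G' := (parabolaGraph n w s).augment H
  have hedge := fun (e : Fin n × Fin n) (he : e ∈ l) =>
    exists_weight_eq_of_mem_augment_parabolaGraph hH hj (hl.mem_edges he)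
  obtain ⟨m, hm⟩ := exists_sum_map_eq_natCast fun e he => (hedge e he).imp fun _ hk => hk.1
  have hmL : m ≤ L := by
    rw [walkWeight, hm, ENNReal.ofReal_natCast] at hweight
    exact Nat.lt_succ_iff.mp (by exact_mod_cast hweight)
  set g : Fin n → ℝ := fun z => (tangentPotential j (toGrid w z) : ℝ)
  have hg : ∀ a b, g b - g a = (tangentPotential j (toGrid w b - toGrid w a) : ℝ) := by
    intro a b; simp [g]
  have hbound : ∀ e ∈ l, g e.2 - g e.1 ≤ (j : ℝ) ^ 2 * G'.w e := by
    intro e he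
    obtain ⟨k, hk, hle, -⟩ := hedge e he
    rw [hg, hk]; exact_mod_cast hle
  have hsum : (l.map fun e => (j : ℝ) ^ 2 * G'.w e).sum = (j : ℝ) ^ 2 * m := by
    rw [List.sum_map_mul_left, hm]
  have hxy' : g y - g x = (j : ℝ) ^ 2 * L := by
    rw [hg, hxy, map_nsmul, tangentPotential_parabolaVec, sub_self, nsmul_eq_mul]
    simp [mul_comm]
  have hj0 : (0 : ℝ) < (j : ℝ) ^ 2 := by
    have : 0 < j := by omega
    positivity
  have hLm : L ≤ m := by
    have := hl.sub_le_sum g _ hbound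
    rw [hsum, hxy'] at this
    exact_mod_cast le_of_mul_le_mul_left this hj0
  have htight := hl.sub_eq_of_sum_le g _ hbound (by
    rw [hsum, hxy']; gcongr)
  refine ⟨by rw [hm]; exact_mod_cast le_antisymm hmL hLm, fun e he => ?_⟩
  obtain ⟨k, hk, -, heq⟩ := hedge e he
  refine ⟨k, hk, heq ?_⟩
  have := htight e he
  rw [hg, hk] at this
  exact_mod_cast this

end AugmentedGrid

section Segments

variable {n w h s j L a₁ a₂ β : ℕ} {H : Finset (Fin n × Fin n)}

def IsForwardSegment (j : ℕ) (A x y : ℤ × ℤ) : Prop :=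
  ∃ (t : ℤ) (k : ℕ), 0 < k ∧ x = A + t • parabolaVec j ∧ y = x + k • parabolaVec j

theorem IsForwardSegment.unique {j' : ℕ} {A A' x y : ℤ × ℤ} (hs : IsForwardSegment j A x y)
    (hs' : IsForwardSegment j' A' x y) (hj : 0 < j) (hA : 0 ≤ A.1) (hAj : A.1 < j)
    (hA' : 0 ≤ A'.1) (hAj' : A'.1 < j') : j = j' ∧ A = A' := by
  obtain ⟨t, k, hk, hx, hy⟩ := hs
  obtain ⟨t', k', hk', hx', hy'⟩ := hs'
  have hline := hx.symm.trans hx'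
  have hstep := add_left_cancel (hy.symm.trans hy')
  simp only [parabolaVec, Prod.ext_iff, Prod.fst_add, Prod.snd_add, Prod.smul_mk, smul_eq_mul,
    nsmul_eq_mul] at hline hstep
  obtain ⟨hy1, hy2⟩ := hstep
  have hkj : (k : ℤ) * j ≠ 0 := by positivity
  have hjj : (j : ℤ) = j' := mul_left_cancel₀ hkj (by linear_combination hy2 - (j' : ℤ) * hy1)
  obtain rfl : j = j' := by exact_mod_cast hjj
  have hA1 : A.1 - A'.1 = 0 := Int.eq_zero_of_abs_lt_dvd (m := j)
    ⟨t' - t, by linear_combination hline.1⟩ (abs_sub_lt_iff.mpr ⟨by omega, by omega⟩)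
  have htt : t = t' := mul_right_cancel₀ (show (j : ℤ) ≠ 0 by positivity)
    (by linear_combination hline.1 - hA1)
  subst htt
  exact ⟨rfl, Prod.ext (by omega) (by linarith [hline.2])⟩

theorem exists_dist_parabolaGraph_eq (hn : w * h ≤ n) (hx : a₁ + L * j < w)
    (hy : a₂ + L * j ^ 2 < h) (hj : s < j) (hj' : j ≤ 2 * s) :
    ∃ u b : Fin n, toGrid w u = ((a₁ : ℤ), (a₂ : ℤ)) ∧
      toGrid w b = ((a₁ : ℤ), (a₂ : ℤ)) + L • parabolaVec j ∧
      (parabolaGraph n w s).dist u b = L := by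
  have hbox : ∀ m : Fin (L + 1),
      ∃ u : Fin n, toGrid w u = ((a₁ : ℤ), (a₂ : ℤ)) + (m : ℕ) • parabolaVec j := by
    intro m
    have hm := m.is_le
    obtain ⟨u, hu⟩ := exists_toGrid_eq (x := a₁ + m * j) (y := a₂ + m * j ^ 2) hn
      (by nlinarith) (by nlinarith)
    exact ⟨u, by rw [hu]; simp [parabolaVec]⟩
  choose p hp using hbox
  obtain ⟨l, hl, hlen⟩ := exists_walk_of_forall_mem_edges (G := parabolaGraph n w s) p fun i => by
    refine mem_parabolaGraph_edges.mpr ⟨j, hj, hj', Or.inl ?_⟩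
    simp only [hp, Fin.val_succ, Fin.val_castSucc, succ_nsmul]
    abel
  refine ⟨p 0, p (Fin.last L), by simpa using hp 0, by simpa using hp (Fin.last L), ?_⟩
  have hj0 : 0 < j := by omega
  refine le_antisymm ?_ (le_iInf₂ fun l' hl' => ?_)
  · calc (parabolaGraph n w s).dist (p 0) (p (Fin.last L)) ≤ walkWeight _ l := hl.dist_le
      _ = L := by rw [walkWeight_of_unweighted parabolaGraph_unweighted, hlen]
  have := tangentPotential_le_of_isWalkFrom hj hl'
  rw [hp, hp, Fin.val_last, Fin.val_zero, zero_smul, add_zero, add_sub_cancel_left, map_nsmul,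
    tangentPotential_parabolaVec, sub_self] at this
  rw [walkWeight_of_unweighted parabolaGraph_unweighted]
  have : (L : ℤ) ≤ l'.length := le_of_mul_le_mul_left
    (by simpa [nsmul_eq_mul, mul_comm] using this) (by positivity : (0 : ℤ) < (j : ℤ) ^ 2)
  exact_mod_cast this

theorem exists_mem_isForwardSegment (hn : w * h ≤ n) (hx : a₁ + L * j < w)
    (hy : a₂ + L * j ^ 2 < h) (hj : s < j) (hj' : j ≤ 2 * s) (hL : 1 ≤ L)
    (hEq : ∀ u v, ((parabolaGraph n w s).augment H).hopDist β u v = (parabolaGraph n w s).dist u v)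
    (hβ : β < L) :
    ∃ e ∈ H, IsForwardSegment j ((a₁ : ℤ), (a₂ : ℤ)) (toGrid w e.1) (toGrid w e.2) := by
  set G' := (parabolaGraph n w s).augment H
  set A : ℤ × ℤ := ((a₁ : ℤ), (a₂ : ℤ))
  obtain ⟨u, b, hu, hb, hdist⟩ := exists_dist_parabolaGraph_eq hn hx hy hj hj'
  obtain ⟨l, hl, hlβ, hweight⟩ := exists_walk_of_hopDist_lt (c := L + 1)
    (by rw [hEq, hdist]; exact ENNReal.lt_add_right (by simp) one_ne_zero)
  have hub : toGrid w b - toGrid w u = L • parabolaVec j := by rw [hu, hb]; abel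
  have hβ1 : 1 ≤ β := by
    refine hlβ.trans' (List.length_pos_iff.mpr ?_)
    rintro rfl
    have : toGrid w b - toGrid w u = 0 := by rw [show u = b from hl, sub_self]
    rw [hub, Prod.ext_iff] at this
    simp [parabolaVec] at this
    omega
  have hH := fun e he => reachable_of_mem_of_hopDist_eq_dist hEq hβ1 (e := e) he
  obtain ⟨hsum, hline⟩ := isWalkFrom_augment_parabolaGraph_along_line hH hj hl hub hweight
  obtain ⟨e, he, hwe⟩ := exists_mem_one_lt_of_length_lt_sum (f := G'.w)
    (by rw [hsum]; exact_mod_cast hlβ.trans_lt hβ)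
  have heH : e ∈ H := by
    by_contra heH
    rw [augment_w_of_notMem heH, parabolaGraph_unweighted e] at hwe
    exact lt_irrefl _ hwe
  obtain ⟨t, ht⟩ : ∃ t : ℤ, toGrid w e.1 = A + t • parabolaVec j := by
    refine hl.forall_mem_fst (P := fun z => ∃ t : ℤ, toGrid w z = A + t • parabolaVec j)
      ⟨0, by simp [hu, A]⟩ (fun e' he' ⟨t', ht'⟩ => ?_) e he
    obtain ⟨k, -, hk⟩ := hline e' he'
    exact ⟨t' + k, by rw [← sub_add_cancel (toGrid w e'.2) (toGrid w e'.1), hk, ht', add_smul,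
      natCast_zsmul]; abel⟩
  obtain ⟨k, hk, hstep⟩ := hline e he
  refine ⟨e, heH, t, k, ?_, ht, by rw [← hstep]; abel⟩
  rw [hk] at hwe
  exact_mod_cast one_pos.trans hwe

end Segments

theorem le_card_of_hopDist_eq_dist {n L s β : ℕ} {H : Finset (Fin n × Fin n)}
    (hn : (2 * L + 1) * s * (5 * L * s ^ 2) ≤ n) (hL : 1 ≤ L)
    (hEq : ∀ u v, ((parabolaGraph n ((2 * L + 1) * s) s).augment H).hopDist β u v =
      (parabolaGraph n ((2 * L + 1) * s) s).dist u v)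
    (hβ : β < L) :
    L * s ^ 4 ≤ H.card := by
  set T := Finset.Ioc s (2 * s) ×ˢ Finset.range s ×ˢ Finset.range (L * s ^ 2)
  have hT : T.card = L * s ^ 4 := by
    rw [Finset.card_product, Finset.card_product, Nat.card_Ioc, Finset.card_range,
      Finset.card_range, show 2 * s - s = s by omega]
    ring
  rw [← hT]
  refine Finset.card_le_card_of_forall_subsingleton
    (fun q e => IsForwardSegment q.1 ((q.2.1 : ℤ), (q.2.2 : ℤ))
      (toGrid ((2 * L + 1) * s) e.1) (toGrid ((2 * L + 1) * s) e.2)) ?_ ?_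
  · rintro ⟨j, a₁, a₂⟩ hq
    simp only [T, Finset.mem_product, Finset.mem_Ioc, Finset.mem_range] at hq
    obtain ⟨⟨hj, hj'⟩, ha₁, ha₂⟩ := hq
    have hj2 : j ^ 2 ≤ 4 * s ^ 2 := by nlinarith
    exact exists_mem_isForwardSegment hn (by nlinarith) (by nlinarith) hj hj' hL hEq hβ
  · rintro e - ⟨j, a₁, a₂⟩ ⟨hq, hs⟩ ⟨j', a₁', a₂'⟩ ⟨hq', hs'⟩
    simp only [T, Finset.mem_product, Finset.mem_Ioc, Finset.mem_range] at hq hq'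
    obtain ⟨⟨hj, -⟩, ha₁, -⟩ := hq
    obtain ⟨⟨hj', -⟩, ha₁', -⟩ := hq'
    obtain ⟨rfl, hA⟩ := hs.unique hs' (by omega) (by simp) (by simp; omega) (by simp)
      (by simp; omega)
    simp only [Prod.mk.injEq, Nat.cast_inj] at hA
    rw [hA.1, hA.2]

theorem le_of_hopDist_eq_dist_of_card_le {n K L β : ℕ} {C : ℝ} {H : Finset (Fin n × Fin n)}
    (hC : 0 < C) (hCK : 480 * C ≤ K) (hL : 1 ≤ L) (hlow : 15 * K ^ 3 * L ^ 5 ≤ n)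
    (hup : n < 480 * K ^ 3 * L ^ 5)
    (hEq : ∀ u v, ((parabolaGraph n ((2 * L + 1) * (K * L)) (K * L)).augment H).hopDist β u v =
      (parabolaGraph n ((2 * L + 1) * (K * L)) (K * L)).dist u v)
    (hcard : (H.card : ℝ) ≤ C * n) :
    L ≤ β := by
  by_contra! hβ
  have hbox : (2 * L + 1) * (K * L) * (5 * L * (K * L) ^ 2) ≤ n :=
    calc _ = 5 * K ^ 3 * L ^ 4 * (2 * L + 1) := by ring
      _ ≤ 5 * K ^ 3 * L ^ 4 * (3 * L) := by gcongr; omega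
      _ = 15 * K ^ 3 * L ^ 5 := by ring
      _ ≤ n := hlow
  have hH : ((L * (K * L) ^ 4 : ℕ) : ℝ) ≤ H.card := by
    exact_mod_cast le_card_of_hopDist_eq_dist hbox hL hEq hβ
  have hup' : (n : ℝ) < 480 * K ^ 3 * L ^ 5 := by exact_mod_cast hup
  have : C * n < L * (K * L) ^ 4 :=
    calc C * n < C * (480 * K ^ 3 * L ^ 5) := by gcongr
      _ = 480 * C * (K ^ 3 * L ^ 5) := by ring
      _ ≤ K * (K ^ 3 * L ^ 5) := by gcongr
      _ = L * (K * L) ^ 4 := by ring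
  push_cast at hH
  linarith

section Asymptotics

theorem exists_pow_bracket {k c n : ℕ} (hk : k ≠ 0) (hc : 0 < c) (hn : c ≤ n) :
    ∃ L, 1 ≤ L ∧ c * L ^ k ≤ n ∧ n < 2 ^ k * c * L ^ k := by
  classical
  have hex : ∃ m, n < c * m ^ k :=
    ⟨n + 1, (Nat.lt_succ_self n).trans_le <|
      (Nat.le_self_pow hk _).trans (Nat.le_mul_of_pos_left _ hc)⟩
  obtain ⟨L, hL⟩ : ∃ L, Nat.find hex = L + 1 := Nat.exists_eq_succ_of_ne_zero fun h => by
    simpa [h, zero_pow hk] using Nat.find_spec hex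
  have hlow : c * L ^ k ≤ n := not_lt.mp (Nat.find_min hex (by omega))
  have hup : n < c * (L + 1) ^ k := hL ▸ Nat.find_spec hex
  have hL1 : 1 ≤ L := Nat.one_le_iff_ne_zero.mpr fun h => by simp [h] at hup; omega
  refine ⟨L, hL1, hlow, hup.trans_le ?_⟩
  calc c * (L + 1) ^ k ≤ c * (2 * L) ^ k := by gcongr; omega
    _ = 2 ^ k * c * L ^ k := by ring

theorem rpow_sub_le_of_lt_mul_pow {k : ℕ} (hk : k ≠ 0) {x a L δ : ℝ} (hx : 0 < x) (ha : 0 ≤ a)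
    (hL : 0 ≤ L) (h : x < a * L ^ k) (hδ : a ^ (1 / k : ℝ) ≤ x ^ δ) :
    x ^ (1 / k - δ) ≤ L := by
  have hroot : x ^ (1 / k : ℝ) ≤ a ^ (1 / k : ℝ) * L :=
    calc x ^ (1 / k : ℝ) ≤ (a * L ^ k) ^ (1 / k : ℝ) :=
          Real.rpow_le_rpow hx.le h.le (by positivity)
      _ = a ^ (1 / k : ℝ) * L := by
        rw [Real.mul_rpow ha (by positivity), one_div, Real.pow_rpow_inv_natCast hL hk]
  rw [Real.rpow_sub hx, div_le_iff₀ (Real.rpow_pos_of_pos hx δ)]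
  calc x ^ (1 / k : ℝ) ≤ a ^ (1 / k : ℝ) * L := hroot
    _ ≤ x ^ δ * L := by gcongr
    _ = L * x ^ δ := mul_comm _ _

theorem eventually_exists_pow_bracket {k c : ℕ} (hk : k ≠ 0) (hc : 0 < c) {δ : ℝ} (hδ : 0 < δ) :
    ∃ n0 : ℕ, ∀ n ≥ n0, ∃ L : ℕ, 1 ≤ L ∧ c * L ^ k ≤ n ∧ n < 2 ^ k * c * L ^ k ∧
      (n : ℝ) ^ (1 / k - δ) ≤ L := by
  obtain ⟨n0, hn0⟩ := Filter.eventually_atTop.mp <| (Filter.eventually_ge_atTop c).and <|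
    ((tendsto_rpow_atTop hδ).comp tendsto_natCast_atTop_atTop).eventually_ge_atTop
      (((2 ^ k * c : ℕ) : ℝ) ^ (1 / k : ℝ))
  refine ⟨n0, fun n hn => ?_⟩
  obtain ⟨hcn, hδn⟩ := hn0 n hn
  obtain ⟨L, hL, hlow, hup⟩ := exists_pow_bracket hk hc hcn
  refine ⟨L, hL, hlow, hup, rpow_sub_le_of_lt_mul_pow hk (by exact_mod_cast hc.trans_le hcn)
    (by positivity) (by positivity) (by exact_mod_cast hup) hδn⟩

end Asymptotics

end Hopsets

open Hopsets in
/-- For every `δ > 0` and `C > 0`, for all large enough `n` there is an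
`n`-vertex unweighted undirected graph `G` such that every exact hopset `H` for `G`
(i.e. `dist^{(β)}_{G∪H} = dist_G`) with `|H| ≤ C·n` has hopbound `β ≥ n^{1/5−δ}`. -/
theorem stmt_17 (δ C : ℝ) (hδ : 0 < δ) (hC : 0 < C) :
    ∃ n0 : ℕ, ∀ n ≥ n0, ∃ G : WDigraph (Fin n), G.Symmetric ∧ G.Unweighted ∧
      ∀ (β : ℕ) (H : Finset (Fin n × Fin n)),
        (∀ u v, (G.augment H).hopDist β u v = G.dist u v) →
        (H.card : ℝ) ≤ C * (n : ℝ) →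
        (n : ℝ) ^ (1 / 5 - δ) ≤ (β : ℝ) := by
  obtain ⟨K, hK, hCK⟩ : ∃ K : ℕ, 0 < K ∧ 480 * C ≤ K :=
    ⟨480 * ⌈C⌉₊, by positivity, by push_cast; linarith [Nat.le_ceil C]⟩
  obtain ⟨n0, hn0⟩ := eventually_exists_pow_bracket (k := 5) (c := 15 * K ^ 3) (by norm_num)
    (by positivity) hδ
  refine ⟨n0, fun n hn => ?_⟩
  obtain ⟨L, hL, hlow, hup, hroot⟩ := hn0 n hn
  refine ⟨parabolaGraph n ((2 * L + 1) * (K * L)) (K * L), parabolaGraph_symmetric,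
    parabolaGraph_unweighted, fun β H hEq hcard => ?_⟩
  have hroot' : (n : ℝ) ^ (1 / 5 - δ) ≤ L := by simpa using hroot
  exact hroot'.trans <| Nat.cast_le.mpr <|
    le_of_hopDist_eq_dist_of_card_le hC hCK hL hlow (by linarith) hEq hcard
end

section
/- Let C ≥ 1 and let α, γ, δ be reals with 0 < α+γ−1−δ < 1. Suppose that for every n and every n-vertex directed graph G there exists a d-shortcut H for G with |H| ≤ C·n and d ≤ n^{α+γ−1−δ}. Then there exist constants C', c' ≥ 1 such that for every n-vertex directed graph G and every set P ⊆ V×V of at most n pairs, there exists a subgraph G* ⊆ G with at most C'·n^{α+γ−δ}·(log n)^{c'} edges such that for every (u,v) ∈ P with v reachable from u in G, v is reachable from u in G*. (Consequently, a lower bound of Ω(n^α·p^γ) edges for reachability preservers with p pairs implies that some n-vertex directed graph admits no d-shortcut of size O(n) with d ≤ n^{α+γ−1−δ}.) -/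
open scoped ENNReal

namespace Hopsets

/-- `H` is a `d`-shortcut for the directed graph `G`: `H` is contained in the
transitive closure of `G`, and for every pair `(u,v)` with `v` reachable from `u`
in `G`, the graph `G ∪ H` contains a directed `u`-`v` walk with at most `d` edges. -/
def IsShortcut {V : Type} [DecidableEq V] (G : WDigraph V) (d : ℕ)
    (H : Finset (V × V)) : Prop :=
  (∀ e ∈ H, G.Reachable e.1 e.2) ∧
  ∀ u v, G.Reachable u v → ∃ l, IsWalkFrom (G.augment H) u v l ∧ l.length ≤ d

end Hopsets

/-!
Condensing strongly connected components reduces the problem to graphs whose edges go upwards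
in `ℕ`: a spanning in-tree and out-tree of each component cost `2n` edges, and ranking the
components by the colex order of their ancestor sets is compatible with reachability.

On an upward graph, pairs inside a window `[lo, lo + m)` are preserved recursively. A shortcut
`H` of the window routes each of the `O(m)` pairs through at most `m^x` edges, original or
from `H` (`x = α + γ - 1 - δ`); keeping the original ones costs `O(m^{x+1})` edges. Each edge of
`H` is in turn a pair to preserve: cut at the midpoint of the window, it becomes a pair of the
left half, a crossing original edge and a pair of the right half, so each half receives at most
`|H| = O(m)` pairs. With `⌈log₂ m⌉` levels of recursion this gives `O(n^{x+1} log n)` edges.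
-/

open Finset Relation

namespace Hopsets

open WDigraph

variable {V : Type}

theorem le_of_reflTransGen {α : Type*} [Preorder α] {r : α → α → Prop}
    (hr : ∀ a b, r a b → a ≤ b) {a b : α} (h : ReflTransGen r a b) : a ≤ b := by
  induction h with
  | refl => exact le_rfl
  | tail _ hbc ih => exact ih.trans (hr _ _ hbc)

theorem exists_crossing_of_reflTransGen {α : Type*} [LinearOrder α] {r : α → α → Prop}
    {a b c : α} (h : ReflTransGen r a b) (ha : a < c) (hb : c ≤ b) :
    ∃ s t, r s t ∧ s < c ∧ c ≤ t ∧ ReflTransGen r a s ∧ ReflTransGen r t b := by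
  induction h with
  | refl => exact absurd (ha.trans_le hb) (lt_irrefl _)
  | @tail x b hax hxb ih =>
    rcases lt_or_ge x c with hx | hx
    · exact ⟨x, b, hxb, hx, hb, hax, .refl⟩
    · obtain ⟨s, t, hst, hs, ht, has, htx⟩ := ih hx
      exact ⟨s, t, hst, hs, ht, has, htx.tail hxb⟩

theorem reflTransGen_of_descent {α : Type*} {r : α → α → Prop} (ρ : α → α) (f : α → ℕ)
    (h : ∀ v, ρ v ≠ v → ∃ p, r p v ∧ ρ p = ρ v ∧ f p < f v) (v : α) :
    ReflTransGen r (ρ v) v := by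
  induction hk : f v using Nat.strong_induction_on generalizing v with
  | _ k ih =>
  by_cases hv : ρ v = v
  · rw [hv]
  · obtain ⟨p, hpv, hρ, hlt⟩ := h v hv
    exact hρ ▸ (ih (f p) (hk ▸ hlt) p rfl).tail hpv

namespace WDigraph

def Adj (G : WDigraph V) (u v : V) : Prop := (u, v) ∈ G.edges

def MutuallyReachable (G : WDigraph V) (u v : V) : Prop := G.Reachable u v ∧ G.Reachable v u

noncomputable def hopCount (G : WDigraph V) (u v : V) : ℕ :=
  sInf {k | ∃ l, IsWalkFrom G u v l ∧ l.length = k}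

def IsReachPreserver (G : WDigraph V) (P E : Finset (V × V)) : Prop :=
  ∀ uv ∈ P, G.Reachable uv.1 uv.2 → (G.sub E).Reachable uv.1 uv.2

end WDigraph

theorem isWalkFrom_append {G : WDigraph V} {u w : V} {l₁ l₂ : List (V × V)} :
    IsWalkFrom G u w (l₁ ++ l₂) ↔ ∃ v, IsWalkFrom G u v l₁ ∧ IsWalkFrom G v w l₂ := by
  induction l₁ generalizing u with
  | nil => simp [IsWalkFrom]
  | cons e l ih => simp only [List.cons_append, IsWalkFrom, ih]; aesop

theorem IsWalkFrom.reflTransGen {G : WDigraph V} {r : V → V → Prop} {u v : V}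
    {l : List (V × V)} (hl : IsWalkFrom G u v l) (h : ∀ e ∈ l, e ∈ G.edges → r e.1 e.2) :
    ReflTransGen r u v := by
  induction l generalizing u with
  | nil => exact hl ▸ .refl
  | cons e l ih =>
    obtain ⟨he, rfl, hl⟩ := hl
    exact .head (h e List.mem_cons_self he) (ih hl fun e' he' => h e' (List.mem_cons_of_mem _ he'))

namespace WDigraph

variable {G : WDigraph V} {u v w : V}

theorem reachable_iff_reflTransGen : G.Reachable u v ↔ ReflTransGen G.Adj u v := by
  refine ⟨fun ⟨l, hl⟩ => hl.reflTransGen fun e _ he => he, fun h => ?_⟩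
  induction h using ReflTransGen.head_induction_on with
  | refl => exact ⟨[], rfl⟩
  | head hab _ ih => obtain ⟨l, hl⟩ := ih; exact ⟨_ :: l, hab, rfl, hl⟩

theorem Reachable.refl (G : WDigraph V) (v : V) : G.Reachable v v := ⟨[], rfl⟩

theorem Reachable.trans (h : G.Reachable u v) (h' : G.Reachable v w) : G.Reachable u w := by
  rw [reachable_iff_reflTransGen] at *; exact h.trans h'

theorem Reachable.of_adj (h : G.Adj u v) : G.Reachable u v :=
  reachable_iff_reflTransGen.2 (.single h)

theorem Reachable.mono {E E' : Finset (V × V)} (hE : E ⊆ E') (h : (G.sub E).Reachable u v) :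
    (G.sub E').Reachable u v := by
  rw [reachable_iff_reflTransGen] at *; exact ReflTransGen.mono (fun _ _ he => hE he) _ _ h

theorem IsReachPreserver.mono {P E E' : Finset (V × V)} (hE : E ⊆ E')
    (h : G.IsReachPreserver P E) : G.IsReachPreserver P E' :=
  fun uv huv hr => (h uv huv hr).mono hE

theorem hopCount_le {l : List (V × V)} (hl : IsWalkFrom G u v l) : G.hopCount u v ≤ l.length :=
  Nat.sInf_le ⟨l, hl, rfl⟩

theorem Reachable.exists_walk_hopCount (h : G.Reachable u v) :
    ∃ l, IsWalkFrom G u v l ∧ l.length = G.hopCount u v := by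
  obtain ⟨l, hl⟩ := h
  exact Nat.sInf_mem (s := {k | ∃ l, IsWalkFrom G u v l ∧ l.length = k}) ⟨_, l, hl, rfl⟩

theorem Reachable.exists_adj_hopCount_lt_left (h : G.Reachable u v) (huv : u ≠ v) :
    ∃ s, G.Adj u s ∧ G.Reachable s v ∧ G.hopCount s v < G.hopCount u v := by
  obtain ⟨_ | ⟨e, l⟩, hl, hlen⟩ := h.exists_walk_hopCount
  · exact (huv hl).elim
  · obtain ⟨he, rfl, hl⟩ := hl
    exact ⟨e.2, he, ⟨l, hl⟩, (hopCount_le hl).trans_lt (by simp [← hlen])⟩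

theorem Reachable.exists_adj_hopCount_lt_right (h : G.Reachable u v) (huv : u ≠ v) :
    ∃ p, G.Adj p v ∧ G.Reachable u p ∧ G.hopCount u p < G.hopCount u v := by
  obtain ⟨l, hl, hlen⟩ := h.exists_walk_hopCount
  rcases l.eq_nil_or_concat' with rfl | ⟨l, e, rfl⟩
  · exact (huv hl).elim
  · obtain ⟨p, hl', he, rfl, rfl⟩ := isWalkFrom_append.1 hl
    exact ⟨e.1, he, ⟨l, hl'⟩, (hopCount_le hl').trans_lt (by simp [← hlen])⟩

def sccSetoid (G : WDigraph V) : Setoid V where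
  r := G.MutuallyReachable
  iseqv := ⟨fun v => ⟨.refl G v, .refl G v⟩, fun h => ⟨h.2, h.1⟩,
    fun h h' => ⟨h.1.trans h'.1, h'.2.trans h.2⟩⟩

noncomputable def sccRoot (G : WDigraph V) (v : V) : V := (Quotient.mk G.sccSetoid v).out

theorem mutuallyReachable_sccRoot (v : V) : G.MutuallyReachable (G.sccRoot v) v :=
  Quotient.mk_out (s := G.sccSetoid) v

theorem MutuallyReachable.sccRoot_eq (h : G.MutuallyReachable u v) : G.sccRoot u = G.sccRoot v :=
  congrArg Quotient.out (Quotient.sound h)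

theorem exists_adj_sccRoot_in (hv : G.sccRoot v ≠ v) : ∃ p, G.Adj p v ∧
    G.sccRoot p = G.sccRoot v ∧ G.hopCount (G.sccRoot v) p < G.hopCount (G.sccRoot v) v := by
  have hρ := mutuallyReachable_sccRoot (G := G) v
  obtain ⟨p, hpv, hp, hlt⟩ := hρ.1.exists_adj_hopCount_lt_right hv
  exact ⟨p, hpv, MutuallyReachable.sccRoot_eq ⟨.of_adj hpv, hρ.2.trans hp⟩, hlt⟩

theorem exists_adj_sccRoot_out (hv : G.sccRoot v ≠ v) : ∃ s, G.Adj v s ∧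
    G.sccRoot s = G.sccRoot v ∧ G.hopCount s (G.sccRoot v) < G.hopCount v (G.sccRoot v) := by
  have hρ := mutuallyReachable_sccRoot (G := G) v
  obtain ⟨s, hvs, hs, hlt⟩ := hρ.2.exists_adj_hopCount_lt_left (Ne.symm hv)
  exact ⟨s, hvs, MutuallyReachable.sccRoot_eq ⟨hs.trans hρ.1, .of_adj hvs⟩, hlt⟩

/-- Each vertex other than the root of its component keeps one in-edge and one out-edge inside
the component, chosen to decrease the hop distance from, resp. to, the root; these edges form an
out-tree and an in-tree at each root. -/
theorem exists_scc_certificate [Fintype V] (G : WDigraph V) :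
    ∃ T ⊆ G.edges, #T ≤ 2 * Fintype.card V ∧
      ∀ u v, G.MutuallyReachable u v → (G.sub T).Reachable u v := by
  classical
  choose! pin hpin using fun v (hv : G.sccRoot v ≠ v) => exists_adj_sccRoot_in hv
  choose! pout hpout using fun v (hv : G.sccRoot v ≠ v) => exists_adj_sccRoot_out hv
  set Tin := univ.image fun v => (pin v, v)
  set Tout := univ.image fun v => (v, pout v)
  set T := (Tin ∪ Tout).filter (· ∈ G.edges)
  refine ⟨T, fun _ he => (mem_filter.1 he).2, ?_, fun u v huv => ?_⟩
  · calc #T ≤ #Tin + #Tout := (card_filter_le _ _).trans (card_union_le _ _)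
      _ ≤ Fintype.card V + Fintype.card V :=
        add_le_add (card_image_le.trans_eq card_univ) (card_image_le.trans_eq card_univ)
      _ = _ := (two_mul _).symm
  have hdown : ∀ v, ReflTransGen (G.sub T).Adj (G.sccRoot v) v :=
    reflTransGen_of_descent G.sccRoot (fun v => G.hopCount (G.sccRoot v) v) fun v hv => by
      obtain ⟨hadj, hρ, hlt⟩ := hpin v hv
      exact ⟨pin v, mem_filter.2 ⟨mem_union_left _ (mem_image_of_mem _ (mem_univ v)), hadj⟩,
        hρ, by simpa only [hρ] using hlt⟩
  have hup : ∀ v, ReflTransGen (G.sub T).Adj v (G.sccRoot v) := fun v =>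
    reflTransGen_swap.1 <| reflTransGen_of_descent G.sccRoot (fun v => G.hopCount v (G.sccRoot v))
      (fun v hv => by
        obtain ⟨hadj, hρ, hlt⟩ := hpout v hv
        exact ⟨pout v, mem_filter.2 ⟨mem_union_right _ (mem_image_of_mem _ (mem_univ v)), hadj⟩,
          hρ, by simpa only [hρ] using hlt⟩) v
  rw [reachable_iff_reflTransGen]
  exact (hup u).trans (huv.sccRoot_eq ▸ hdown v)

end WDigraph

section Rank

variable {α : Type*} [LinearOrder α] [Fintype V] (key : V → α)

def rankBy (v : V) : ℕ := #{w | key w < key v}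

variable {key}

theorem rankBy_lt_card (v : V) : rankBy key v < Fintype.card V :=
  card_lt_univ_of_notMem (x := v) (by simp)

theorem rankBy_le_rankBy {u v : V} (h : key u ≤ key v) : rankBy key u ≤ rankBy key v :=
  card_le_card fun w hw => by
    simp only [mem_filter, mem_univ, true_and] at hw ⊢
    exact hw.trans_le h

theorem rankBy_lt_rankBy {u v : V} (h : key u < key v) : rankBy key u < rankBy key v := by
  refine card_lt_card ((ssubset_iff_of_subset fun w hw => ?_).2 ⟨u, by simpa using h, by simp⟩)
  simp only [mem_filter, mem_univ, true_and] at hw ⊢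
  exact hw.trans h

theorem eq_of_rankBy_eq {u v : V} (h : rankBy key u = rankBy key v) : key u = key v := by
  rcases lt_trichotomy (key u) (key v) with hlt | heq | hgt
  · exact absurd h (rankBy_lt_rankBy hlt).ne
  · exact heq
  · exact absurd h (rankBy_lt_rankBy hgt).ne'

end Rank

namespace WDigraph

section Condensation

variable [Fintype V] [LinearOrder V] (G : WDigraph V) {u v : V}

open Classical in
noncomputable def ancestors (v : V) : Finset V := {w | G.Reachable w v}

/-- Reachability makes ancestor sets grow, and the ancestor set determines the strongly connected
component; colex order extends inclusion of finsets to a linear order. -/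
noncomputable def rank (v : V) : ℕ := rankBy (fun v => toColex (G.ancestors v)) v

theorem image_rank_subset (P : Finset (V × V)) :
    P.image (fun e => (G.rank e.1, G.rank e.2)) ⊆
      Ico 0 (Fintype.card V) ×ˢ Ico 0 (Fintype.card V) := by
  intro e he
  obtain ⟨uv, -, rfl⟩ := mem_image.1 he
  simp [mem_product, rankBy_lt_card, rank]

variable {G}

theorem Reachable.rank_le (h : G.Reachable u v) : G.rank u ≤ G.rank v :=
  rankBy_le_rankBy <| Colex.toColex_le_toColex_of_subset fun w hw => by
    simp only [ancestors, mem_filter, mem_univ, true_and] at hw ⊢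
    exact hw.trans h

theorem mutuallyReachable_of_rank_eq (h : G.rank u = G.rank v) : G.MutuallyReachable u v := by
  have hanc : G.ancestors u = G.ancestors v :=
    toColex.injective (eq_of_rankBy_eq (key := fun v => toColex (G.ancestors v)) h)
  have hu : u ∈ G.ancestors v := hanc ▸ by simp [ancestors, Reachable.refl]
  have hv : v ∈ G.ancestors u := hanc ▸ by simp [ancestors, Reachable.refl]
  simp only [ancestors, mem_filter, mem_univ, true_and] at hu hv
  exact ⟨hu, hv⟩

variable (G)

noncomputable def condensation : WDigraph ℕ :=
  ⟨(G.edges.image fun e => (G.rank e.1, G.rank e.2)).filter (fun e => e.1 < e.2), fun _ => 1⟩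

theorem condensation_lt : ∀ e ∈ G.condensation.edges, e.1 < e.2 :=
  fun _ he => (mem_filter.1 he).2

variable {G}

theorem Reachable.condensation (h : G.Reachable u v) :
    G.condensation.Reachable (G.rank u) (G.rank v) := by
  rw [reachable_iff_reflTransGen] at h ⊢
  refine ReflTransGen.lift' G.rank (fun a b hab => ?_) _ _ h
  change ReflTransGen G.condensation.Adj (G.rank a) (G.rank b)
  rcases (Reachable.of_adj hab).rank_le.lt_or_eq with hlt | heq
  · exact .single (mem_filter.2 ⟨mem_image.2 ⟨(a, b), hab, rfl⟩, hlt⟩)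
  · rw [heq]

theorem exists_preserver_of_condensation {T : Finset (V × V)} (hTG : T ⊆ G.edges)
    (hT : ∀ u v, G.MutuallyReachable u v → (G.sub T).Reachable u v)
    {F : Finset (ℕ × ℕ)} (hF : F ⊆ G.condensation.edges) :
    ∃ E ⊆ G.edges, #E ≤ #T + #F ∧ ∀ u v,
      (G.condensation.sub F).Reachable (G.rank u) (G.rank v) → (G.sub E).Reachable u v := by
  obtain ⟨F', hF'G, hinj, rfl⟩ := exists_subset_injOn_image_eq_of_surjOn
    (f := fun e => (G.rank e.1, G.rank e.2)) (G.edges : Set (V × V)) F fun f hf => by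
      obtain ⟨g, hg, hgf⟩ := mem_image.1 (mem_filter.1 (hF hf)).1
      exact ⟨g, hg, hgf⟩
  refine ⟨T ∪ F', union_subset hTG hF'G, (card_union_le _ _).trans_eq
    (by rw [card_image_of_injOn hinj]), fun u v h => ?_⟩
  have hTE : ∀ u v, G.MutuallyReachable u v → (G.sub (T ∪ F')).Reachable u v :=
    fun u v h => (hT u v h).mono subset_union_left
  rw [reachable_iff_reflTransGen] at h
  suffices ∀ a b, ReflTransGen (G.condensation.sub (F'.image _)).Adj a b →
      ∀ u v, G.rank u = a → G.rank v = b → (G.sub (T ∪ F')).Reachable u v from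
    this _ _ h u v rfl rfl
  intro a b h
  induction h with
  | refl => exact fun u v hu hv => hTE u v (mutuallyReachable_of_rank_eq (hu.trans hv.symm))
  | tail _ hbc ih =>
    intro u v hu hv
    obtain ⟨g, hg, hgbc⟩ := mem_image.1 hbc
    simp only [Prod.mk.injEq] at hgbc
    exact ((ih u g.1 hu hgbc.1).trans (Reachable.of_adj (mem_union_right _ hg))).trans
      (hTE _ _ (mutuallyReachable_of_rank_eq (hgbc.2.trans hv.symm)))

end Condensation

end WDigraph

theorem IsShortcut.exists_sparse [DecidableEq V] {G : WDigraph V} {d : ℕ}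
    {H : Finset (V × V)} (hH : IsShortcut G d H) (P : Finset (V × V)) :
    ∃ W ⊆ G.edges, #W ≤ #P * d ∧ ∀ p ∈ P, G.Reachable p.1 p.2 →
      ReflTransGen (fun a b => (a, b) ∈ W ∨ (a, b) ∈ H) p.1 p.2 := by
  classical
  choose! walk hwalk hlen using hH.2
  set P' := P.filter fun p => G.Reachable p.1 p.2
  refine ⟨P'.biUnion fun p => (walk p.1 p.2).toFinset.filter (· ∈ G.edges),
    biUnion_subset.2 fun _ _ _ he => (mem_filter.1 he).2, ?_, fun p hp hr => ?_⟩
  · calc _ ≤ ∑ p ∈ P', #((walk p.1 p.2).toFinset.filter (· ∈ G.edges)) := card_biUnion_le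
      _ ≤ ∑ _p ∈ P', d := sum_le_sum fun p hp => (card_filter_le _ _).trans
          ((List.toFinset_card_le _).trans (hlen _ _ (mem_filter.1 hp).2))
      _ ≤ #P * d := by
          rw [sum_const, smul_eq_mul]; exact Nat.mul_le_mul_right _ (card_filter_le _ _)
  · refine (hwalk _ _ hr).reflTransGen fun e he heGH => ?_
    rcases mem_union.1 heGH with heG | heH
    · exact .inl (mem_biUnion.2 ⟨p, mem_filter.2 ⟨hp, hr⟩,
        mem_filter.2 ⟨List.mem_toFinset.2 he, heG⟩⟩)
    · exact .inr heH

def shiftPair (lo : ℕ) {m : ℕ} (e : Fin m × Fin m) : ℕ × ℕ := (lo + e.1, lo + e.2)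

theorem shiftPair_injective (lo m : ℕ) : Function.Injective (shiftPair lo (m := m)) := by
  intro a b h
  simp only [shiftPair, Prod.mk.injEq, Nat.add_left_cancel_iff] at h
  exact Prod.ext (Fin.ext h.1) (Fin.ext h.2)

def WDigraph.window (D : WDigraph ℕ) (lo m : ℕ) : WDigraph (Fin m) :=
  ⟨univ.filter (fun e => shiftPair lo e ∈ D.edges), fun _ => 1⟩

section Monotone

variable {D : WDigraph ℕ} (hD : ∀ e ∈ D.edges, e.1 < e.2)
include hD

theorem WDigraph.Reachable.le {a b : ℕ} (h : D.Reachable a b) : a ≤ b :=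
  le_of_reflTransGen (fun a b hab => (hD (a, b) hab).le) (reachable_iff_reflTransGen.1 h)

theorem window_reachable_iff {lo m : ℕ} {i j : Fin m} :
    (D.window lo m).Reachable i j ↔ D.Reachable (lo + i) (lo + j) := by
  simp only [reachable_iff_reflTransGen]
  refine ⟨fun h => ReflTransGen.lift (r := (D.window lo m).Adj) (p := D.Adj)
    (fun i : Fin m => lo + (i : ℕ)) (fun a b hab => (mem_filter.1 hab).2) _ _ h, fun h => ?_⟩
  suffices ∀ a, ReflTransGen D.Adj a (lo + j) → ∀ i : Fin m, a = lo + i →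
      ReflTransGen (D.window lo m).Adj i j from this _ h i rfl
  intro a h
  induction h using ReflTransGen.head_induction_on with
  | refl => intro i hi; rw [Fin.ext (by omega : (i : ℕ) = j)]
  | @head a c hac hcj ih =>
    rintro i rfl
    have hic := hD _ hac
    have hcj := (reachable_iff_reflTransGen.2 hcj).le hD
    have hj := j.2
    exact .head (mem_filter.2 ⟨mem_univ _, by simpa [shiftPair, show lo + (c - lo) = c by omega]⟩)
      (ih ⟨c - lo, by omega⟩ (by simp only; omega))

theorem IsShortcut.image_shiftPair {lo m d : ℕ} {H : Finset (Fin m × Fin m)}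
    (hH : IsShortcut (D.window lo m) d H) : ∀ q ∈ H.image (shiftPair lo),
      q ∈ Ico lo (lo + m) ×ˢ Ico lo (lo + m) ∧ D.Reachable q.1 q.2 := by
  simp only [mem_image, forall_exists_index, and_imp]
  rintro _ q hq rfl
  exact ⟨by simp [shiftPair, mem_product], (window_reachable_iff hD).1 (hH.1 q hq)⟩

theorem IsShortcut.exists_reduction {lo m d : ℕ} {H : Finset (Fin m × Fin m)}
    (hH : IsShortcut (D.window lo m) d H) {P : Finset (ℕ × ℕ)}
    (hP : P ⊆ Ico lo (lo + m) ×ˢ Ico lo (lo + m)) :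
    ∃ W ⊆ D.edges, #W ≤ #P * d ∧ ∀ F, W ⊆ F →
      D.IsReachPreserver (H.image (shiftPair lo)) F → D.IsReachPreserver P F := by
  obtain ⟨W, hWΦ, hWcard, hW⟩ := hH.exists_sparse (univ.filter fun q => shiftPair lo q ∈ P)
  refine ⟨W.image (shiftPair lo), ?_, ?_, fun F hWF hHF p hp hr => ?_⟩
  · simp only [image_subset_iff]
    exact fun q hq => (mem_filter.1 (hWΦ hq)).2
  · calc #(W.image _) ≤ #W := card_image_le
      _ ≤ _ := hWcard
      _ ≤ #P * d := Nat.mul_le_mul_right _ <| card_le_card_of_injOn (shiftPair lo)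
          (fun q hq => (mem_filter.1 hq).2) (shiftPair_injective lo m).injOn
  have hpbox := hP hp
  simp only [mem_product, mem_Ico] at hpbox
  set i : Fin m := ⟨p.1 - lo, by omega⟩
  set j : Fin m := ⟨p.2 - lo, by omega⟩
  have hpij : p = shiftPair lo (i, j) := by simp only [shiftPair, i, j]; ext <;> simp <;> omega
  rw [hpij] at hp hr ⊢
  have hij := hW (i, j) (mem_filter.2 ⟨mem_univ _, hp⟩) ((window_reachable_iff hD).2 hr)
  rw [reachable_iff_reflTransGen]
  refine ReflTransGen.lift' (r := fun a b => (a, b) ∈ W ∨ (a, b) ∈ H)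
    (fun i : Fin m => lo + (i : ℕ)) (fun a b hab => ?_) _ _ hij
  rcases hab with hab | hab
  · exact .single (hWF (mem_image_of_mem _ hab))
  · exact reachable_iff_reflTransGen.1 <| hHF _ (mem_image_of_mem _ hab)
      ((window_reachable_iff hD).1 (hH.1 _ hab))

theorem WDigraph.Reachable.exists_crossing {a b c : ℕ} (h : D.Reachable a b) (ha : a < c)
    (hb : c ≤ b) : ∃ e ∈ D.edges, a ≤ e.1 ∧ e.1 < c ∧ c ≤ e.2 ∧ e.2 ≤ b ∧
      D.Reachable a e.1 ∧ D.Reachable e.2 b := by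
  obtain ⟨s, t, hst, hs, ht, has, htb⟩ :=
    exists_crossing_of_reflTransGen (reachable_iff_reflTransGen.1 h) ha hb
  rw [← reachable_iff_reflTransGen] at has htb
  exact ⟨(s, t), hst, has.le hD, hs, ht, htb.le hD, has, htb⟩

theorem exists_split_at {lo c hi : ℕ} {Q : Finset (ℕ × ℕ)}
    (hQ : ∀ q ∈ Q, q ∈ Ico lo hi ×ˢ Ico lo hi ∧ D.Reachable q.1 q.2) :
    ∃ QL ⊆ Ico lo c ×ˢ Ico lo c, ∃ QR ⊆ Ico c hi ×ˢ Ico c hi, ∃ S ⊆ D.edges,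
      #QL ≤ #Q ∧ #QR ≤ #Q ∧ #S ≤ #Q ∧ ∀ F, S ⊆ F → D.IsReachPreserver QL F →
        D.IsReachPreserver QR F → D.IsReachPreserver Q F := by
  choose! σ hσD hσ using fun q (hq : q ∈ Q) (h1 : q.1 < c) (h2 : c ≤ q.2) =>
    (hQ q hq).2.exists_crossing hD h1 h2
  have hQ' : ∀ q ∈ Q, lo ≤ q.1 ∧ q.1 ≤ q.2 ∧ q.2 < hi := fun q hq => by
    have := hQ q hq
    simp only [mem_product, mem_Ico] at this
    exact ⟨this.1.1.1, this.2.le hD, this.1.2.2⟩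
  refine ⟨(Q.filter (·.1 < c)).image fun q => (q.1, if q.2 < c then q.2 else (σ q).1), ?_,
    (Q.filter (c ≤ ·.2)).image fun q => (if c ≤ q.1 then q.1 else (σ q).2, q.2), ?_,
    (Q.filter fun q => q.1 < c ∧ c ≤ q.2).image σ, ?_, card_image_le.trans (card_filter_le _ _),
    card_image_le.trans (card_filter_le _ _), card_image_le.trans (card_filter_le _ _),
    fun F hSF hL hR q hq hqr => ?_⟩
  · simp only [image_subset_iff, mem_filter, mem_product, mem_Ico, and_imp]
    intro q hq h1
    have := hQ' q hq
    split_ifs with h2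
    · omega
    · have := hσ q hq h1 (not_lt.1 h2)
      omega
  · simp only [image_subset_iff, mem_filter, mem_product, mem_Ico, and_imp]
    intro q hq h2
    have := hQ' q hq
    split_ifs with h1
    · omega
    · have := hσ q hq (not_le.1 h1) h2
      omega
  · simp only [image_subset_iff, mem_filter, and_imp]
    exact fun q hq h1 h2 => hσD q hq h1 h2
  have hq12 := (hQ' q hq).2.1
  by_cases h2 : q.2 < c
  · exact hL _ (mem_image.2 ⟨q, mem_filter.2 ⟨hq, by omega⟩, by simp [h2]⟩) hqr
  by_cases h1 : c ≤ q.1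
  · exact hR _ (mem_image.2 ⟨q, mem_filter.2 ⟨hq, by omega⟩, by simp [h1]⟩) hqr
  rw [not_lt] at h2
  rw [not_le] at h1
  obtain ⟨-, -, -, -, hqs, htq⟩ := hσ q hq h1 h2
  have hleft := hL (q.1, (σ q).1)
    (mem_image.2 ⟨q, mem_filter.2 ⟨hq, h1⟩, by simp [not_lt.2 h2]⟩) hqs
  have hright := hR ((σ q).2, q.2)
    (mem_image.2 ⟨q, mem_filter.2 ⟨hq, h2⟩, by simp [not_le.2 h1]⟩) htq
  have hcrossing := hSF (mem_image_of_mem σ (mem_filter.2 ⟨hq, h1, h2⟩))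
  exact (hleft.trans (Reachable.of_adj hcrossing)).trans hright

end Monotone

noncomputable def costBound (y : ℝ) (m : ℕ) : ℝ := (Nat.clog 2 m + 1) * (m : ℝ) ^ y

theorem costBound_nonneg (y : ℝ) (m : ℕ) : 0 ≤ costBound y m := by
  unfold costBound; positivity

theorem costBound_split {y : ℝ} (hy : 1 ≤ y) {m : ℕ} (hm : 2 ≤ m) :
    (m : ℝ) ^ y + costBound y (m / 2) + costBound y (m - m / 2) ≤ costBound y m := by
  have hclog : ∀ k ≤ (m + 1) / 2, (Nat.clog 2 k : ℝ) + 1 ≤ Nat.clog 2 m := by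
    intro k hk
    have hm' := Nat.clog_of_two_le one_lt_two hm
    rw [show (m + 2 - 1) / 2 = (m + 1) / 2 by omega] at hm'
    have := Nat.clog_mono_right 2 hk
    exact_mod_cast (by omega : Nat.clog 2 k + 1 ≤ Nat.clog 2 m)
  have hrpow : ((m / 2 : ℕ) : ℝ) ^ y + ((m - m / 2 : ℕ) : ℝ) ^ y ≤ (m : ℝ) ^ y := by
    have := Real.add_rpow_le_rpow_add (Nat.cast_nonneg (m / 2)) (Nat.cast_nonneg (m - m / 2)) hy
    rwa [← Nat.cast_add, Nat.add_sub_cancel' (Nat.div_le_self _ _)] at this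
  have hL := hclog (m / 2) (by omega)
  have hR := hclog (m - m / 2) (by omega)
  unfold costBound
  calc _ ≤ (m : ℝ) ^ y + Nat.clog 2 m * ((m / 2 : ℕ) : ℝ) ^ y
        + Nat.clog 2 m * ((m - m / 2 : ℕ) : ℝ) ^ y := by gcongr
    _ ≤ _ := by nlinarith [Nat.cast_nonneg (α := ℝ) (Nat.clog 2 m)]

theorem mul_mul_rpow_add_mul_le {C X : ℝ} (hC : 0 ≤ C) (hX : 0 ≤ X) {m : ℕ} (hm : 1 ≤ m) :
    4 * C * m * (m : ℝ) ^ X + C * m ≤ 5 * C * (m : ℝ) ^ (X + 1) := by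
  have hmX : 1 ≤ (m : ℝ) ^ X := Real.one_le_rpow (by exact_mod_cast hm) hX
  rw [Real.rpow_add_one (by positivity)]
  nlinarith [mul_nonneg (mul_nonneg hC (Nat.cast_nonneg (α := ℝ) m)) (sub_nonneg.2 hmX)]

theorem exists_preserver_of_monotone {C X : ℝ} (hC : 0 ≤ C) (hX : 0 ≤ X)
    (hyp : ∀ m : ℕ, ∀ G : WDigraph (Fin m), ∃ (d : ℕ) (H : Finset (Fin m × Fin m)),
      IsShortcut G d H ∧ (#H : ℝ) ≤ C * m ∧ (d : ℝ) ≤ (m : ℝ) ^ X)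
    {D : WDigraph ℕ} (hD : ∀ e ∈ D.edges, e.1 < e.2) (m lo : ℕ) {P : Finset (ℕ × ℕ)}
    (hP : P ⊆ Ico lo (lo + m) ×ˢ Ico lo (lo + m)) (hPcard : (#P : ℝ) ≤ 4 * C * m) :
    ∃ F ⊆ D.edges, (#F : ℝ) ≤ 5 * C * costBound (X + 1) m ∧ D.IsReachPreserver P F := by
  induction m using Nat.strong_induction_on generalizing lo P with
  | _ m IH =>
  rcases lt_or_ge m 2 with hm | hm
  · refine ⟨∅, empty_subset _, ?_, fun p hp _ => ?_⟩
    · simpa using mul_nonneg (by positivity : 0 ≤ 5 * C) (costBound_nonneg (X + 1) m)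
    · have := hP hp
      simp only [mem_product, mem_Ico] at this
      rw [show p.2 = p.1 by omega]
      exact .refl _ _
  obtain ⟨d, H, hH, hHcard, hd⟩ := hyp m (D.window lo m)
  obtain ⟨W, hWD, hWcard, hW⟩ := hH.exists_reduction hD hP
  obtain ⟨QL, hQL, QR, hQR, S, hSD, hQLcard, hQRcard, hScard, hsplit⟩ :=
    exists_split_at hD (c := lo + m / 2) (hH.image_shiftPair hD)
  have hQ : (#(H.image (shiftPair lo)) : ℝ) ≤ C * m :=
    (Nat.cast_le.2 card_image_le).trans hHcard
  have hhalf : ∀ k, m ≤ 4 * k → C * m ≤ 4 * C * k := fun k hk => by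
    calc C * m ≤ C * (4 * k : ℕ) := by gcongr
      _ = 4 * C * k := by push_cast; ring
  obtain ⟨FL, hFLD, hFLcard, hFL⟩ := IH (m / 2) (by omega) lo hQL
    (((Nat.cast_le.2 hQLcard).trans hQ).trans (hhalf _ (by omega)))
  obtain ⟨FR, hFRD, hFRcard, hFR⟩ := IH (m - m / 2) (by omega) (lo + m / 2)
    (by rwa [show lo + m / 2 + (m - m / 2) = lo + m by omega])
    (((Nat.cast_le.2 hQRcard).trans hQ).trans (hhalf _ (by omega)))
  refine ⟨W ∪ (S ∪ FL ∪ FR), union_subset hWD (union_subset (union_subset hSD hFLD) hFRD), ?_,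
    hW _ subset_union_left <| (hsplit _ (subset_union_left.trans subset_union_left)
      (hFL.mono (subset_union_right.trans subset_union_left)) (hFR.mono subset_union_right)).mono
      subset_union_right⟩
  have hunion : #(W ∪ (S ∪ FL ∪ FR)) ≤ #W + #S + #FL + #FR := by
    have := card_union_le W (S ∪ FL ∪ FR)
    have := card_union_le (S ∪ FL) FR
    have := card_union_le S FL
    omega
  have hWcard' : (#W : ℝ) ≤ 4 * C * m * (m : ℝ) ^ X :=
    calc (#W : ℝ) ≤ #P * d := by exact_mod_cast hWcard
      _ ≤ 4 * C * m * (m : ℝ) ^ X := mul_le_mul hPcard hd (by positivity) (by positivity)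
  have hlevel := mul_mul_rpow_add_mul_le hC hX (by omega : 1 ≤ m)
  calc (#(W ∪ (S ∪ FL ∪ FR)) : ℝ) ≤ #W + #S + #FL + #FR := by exact_mod_cast hunion
    _ ≤ 5 * C * ((m : ℝ) ^ (X + 1) + costBound (X + 1) (m / 2)
        + costBound (X + 1) (m - m / 2)) := by
      linarith [(Nat.cast_le.2 hScard).trans hQ]
    _ ≤ 5 * C * costBound (X + 1) m :=
      mul_le_mul_of_nonneg_left (costBound_split (by linarith) hm) (by positivity)

theorem clog_add_one_le_log {n : ℕ} (hn : 2 ≤ n) : (Nat.clog 2 n : ℝ) + 1 ≤ 5 * Real.log n := by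
  have hk : 1 ≤ Nat.clog 2 n := Nat.clog_pos one_lt_two hn
  have hpow : (2 : ℝ) ^ (Nat.clog 2 n - 1) < n := by
    exact_mod_cast Nat.pow_pred_clog_lt_self one_lt_two (by omega : 1 < n)
  have hlog := Real.log_lt_log (by positivity) hpow
  rw [Real.log_pow, Nat.cast_sub hk, Nat.cast_one] at hlog
  have hlog2 := Real.log_two_gt_d9
  have hlogn : Real.log 2 ≤ Real.log n := Real.log_le_log two_pos (by exact_mod_cast hn)
  have hk' : (1 : ℝ) ≤ Nat.clog 2 n := by exact_mod_cast hk
  nlinarith [mul_nonneg (sub_nonneg.2 hk') (by linarith : (0 : ℝ) ≤ Real.log 2 - 0.6931471803)]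

theorem two_mul_add_costBound_le {C y : ℝ} (hC : 1 ≤ C) (hy : 1 ≤ y) {n : ℕ} (hn : 2 ≤ n) :
    2 * n + 5 * C * costBound y n ≤ 28 * C * (n : ℝ) ^ y * Real.log n := by
  have hclog := clog_add_one_le_log hn
  have hlog2 := Real.log_two_gt_d9
  have hlogn : Real.log 2 ≤ Real.log n := Real.log_le_log two_pos (by exact_mod_cast hn)
  have hny : (n : ℝ) ≤ (n : ℝ) ^ y := by
    simpa using Real.rpow_le_rpow_of_exponent_le (by exact_mod_cast (by omega : 1 ≤ n)) hy
  have hny0 : (0 : ℝ) ≤ (n : ℝ) ^ y := by positivity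
  have hC1 : (0 : ℝ) ≤ C - 1 := by linarith
  unfold costBound
  nlinarith [mul_le_mul_of_nonneg_right hclog hny0, mul_nonneg hny0 hC1,
    mul_nonneg (mul_nonneg hny0 hC1) (by linarith : (0 : ℝ) ≤ Real.log n)]

end Hopsets

open Hopsets in
theorem stmt_19_general (C α γ δ : ℝ) (hC : 1 ≤ C)
    (h1 : 0 < α + γ - 1 - δ)
    (hyp : ∀ n : ℕ, ∀ G : WDigraph (Fin n),
      ∃ (d : ℕ) (H : Finset (Fin n × Fin n)), IsShortcut G d H ∧
        (H.card : ℝ) ≤ C * (n : ℝ) ∧ (d : ℝ) ≤ (n : ℝ) ^ (α + γ - 1 - δ)) :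
    ∃ C' c' : ℝ, 1 ≤ C' ∧ 1 ≤ c' ∧
      ∀ n : ℕ, ∀ G : WDigraph (Fin n), ∀ P : Finset (Fin n × Fin n), P.card ≤ n →
        ∃ Estar ⊆ G.edges,
          (Estar.card : ℝ) ≤ C' * (n : ℝ) ^ (α + γ - δ) * (Real.log n) ^ c' ∧
          ∀ uv ∈ P, G.Reachable uv.1 uv.2 → (G.sub Estar).Reachable uv.1 uv.2 := by
  refine ⟨28 * C, 1, by linarith, le_rfl, fun n G P hP => ?_⟩
  rw [Real.rpow_one, show α + γ - δ = (α + γ - 1 - δ) + 1 by ring]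
  rcases lt_or_ge n 2 with hn | hn
  · have : Subsingleton (Fin n) := Fin.subsingleton_iff_le_one.2 (by omega)
    refine ⟨∅, Finset.empty_subset _, by rw [Finset.card_empty, Nat.cast_zero]; positivity,
      fun uv _ _ => ?_⟩
    rw [Subsingleton.elim uv.2 uv.1]
    exact .refl _ _
  obtain ⟨T, hTG, hTcard, hT⟩ := G.exists_scc_certificate
  have hPcard : ((P.image fun e => (G.rank e.1, G.rank e.2)).card : ℝ) ≤ 4 * C * n := by
    calc ((P.image _).card : ℝ) ≤ n := by exact_mod_cast Finset.card_image_le.trans hP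
      _ ≤ 4 * C * n := by nlinarith [Nat.cast_nonneg (α := ℝ) n]
  obtain ⟨F, hFD, hFcard, hF⟩ := exists_preserver_of_monotone (by linarith) h1.le hyp
    G.condensation_lt n 0 (by simpa using G.image_rank_subset P) hPcard
  obtain ⟨E, hEG, hEcard, hE⟩ := G.exists_preserver_of_condensation hTG hT hFD
  refine ⟨E, hEG, ?_, fun uv huv h => hE _ _ (hF _ (Finset.mem_image_of_mem _ huv) h.condensation)⟩
  rw [Fintype.card_fin] at hTcard
  calc (E.card : ℝ) ≤ T.card + F.card := by exact_mod_cast hEcard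
    _ ≤ 2 * n + 5 * C * costBound (α + γ - 1 - δ + 1) n := by
      have : (T.card : ℝ) ≤ 2 * n := by exact_mod_cast hTcard
      linarith
    _ ≤ _ := two_mul_add_costBound_le hC (by linarith) hn

open Hopsets in
/-- If every `n`-vertex directed graph admits a `d`-shortcut of size at
most `C·n` with `d ≤ n^{α+γ−1−δ}`, then every `n`-vertex directed graph and every set
`P` of at most `n` pairs admit a reachability preserver (a subgraph preserving
reachability for all pairs of `P`) with at most `C'·n^{α+γ−δ}·(log n)^{c'}` edges. -/
theorem stmt_19 (C α γ δ : ℝ) (hC : 1 ≤ C)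
    (h1 : 0 < α + γ - 1 - δ) (h2 : α + γ - 1 - δ < 1)
    (hyp : ∀ n : ℕ, ∀ G : WDigraph (Fin n),
      ∃ (d : ℕ) (H : Finset (Fin n × Fin n)), IsShortcut G d H ∧
        (H.card : ℝ) ≤ C * (n : ℝ) ∧ (d : ℝ) ≤ (n : ℝ) ^ (α + γ - 1 - δ)) :
    ∃ C' c' : ℝ, 1 ≤ C' ∧ 1 ≤ c' ∧
      ∀ n : ℕ, ∀ G : WDigraph (Fin n), ∀ P : Finset (Fin n × Fin n), P.card ≤ n →
        ∃ Estar ⊆ G.edges,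
          (Estar.card : ℝ) ≤ C' * (n : ℝ) ^ (α + γ - δ) * (Real.log n) ^ c' ∧
          ∀ uv ∈ P, G.Reachable uv.1 uv.2 → (G.sub Estar).Reachable uv.1 uv.2 :=
  stmt_19_general C α γ δ hC h1 hyp
end
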